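/- arXiv:1704.06472 — 10 statements merged into one kernel-verified Lean document; each statement's English description precedes it below -/
import Mathlib

section
/- For all real numbers x1, x2, ξ1, ξ2, one has |e(x1) + e(x1+ξ1)| + |e(x2) + e(x2+ξ2)| ≤ 4 - 8·sin(π·‖ξ1-ξ2‖/4)², where e(x) = exp(2πix) and ‖t‖ denotes the distance from t to the nearest integer. -/
noncomputable def e (x : ℝ) : ℂ := Complex.exp (2 * Real.pi * Complex.I * x)

/-- distance from a real number to the nearest integer -/
noncomputable def nearestIntDist (t : ℝ) : ℝ := |t - round t|

/-!
Factoring out `e x` and the half-angle phase `exp (π i ξ)` gives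
`‖e x + e (x + ξ)‖ = 2 |cos (π ξ)| = 2 cos (π ‖ξ‖)`. With `a = ‖ξ₁‖`, `b = ‖ξ₂‖`, `d = ‖ξ₁ - ξ₂‖`
we have `0 ≤ d ≤ a + b ≤ 1`, so by sum-to-product
`cos (π a) + cos (π b) ≤ 2 cos (π (a + b) / 2) ≤ 2 cos (π d / 2)`,
and `4 cos (π d / 2) = 4 - 8 sin (π d / 4) ^ 2`.
-/

open Real

lemma norm_e (x : ℝ) : ‖e x‖ = 1 := by
  rw [e, Complex.norm_exp]
  simp

lemma e_add (x y : ℝ) : e (x + y) = e x * e y := by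
  rw [e, e, e, ← Complex.exp_add]
  push_cast
  ring_nf

lemma one_add_e (ξ : ℝ) :
    1 + e ξ = Complex.exp (π * ξ * Complex.I) * (2 * Real.cos (π * ξ)) := by
  rw [Complex.ofReal_cos, Complex.ofReal_mul, Complex.two_cos, mul_add, ← Complex.exp_add,
    ← Complex.exp_add, e]
  rw [add_comm, ← Complex.exp_zero]
  congr 2 <;> ring

lemma norm_one_add_e (ξ : ℝ) : ‖1 + e ξ‖ = 2 * |cos (π * ξ)| := by
  rw [one_add_e, norm_mul, ← Complex.ofReal_mul, Complex.norm_exp_ofReal_mul_I, one_mul,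
    ← Complex.ofReal_ofNat, ← Complex.ofReal_mul, Complex.norm_real, norm_mul, Real.norm_ofNat,
    Real.norm_eq_abs]

lemma norm_e_add_e_add (x ξ : ℝ) : ‖e x + e (x + ξ)‖ = 2 * |cos (π * ξ)| := by
  rw [e_add, ← mul_one_add, norm_mul, norm_e, one_mul, norm_one_add_e]

lemma nearestIntDist_nonneg (t : ℝ) : 0 ≤ nearestIntDist t := abs_nonneg _

lemma nearestIntDist_le_half (t : ℝ) : nearestIntDist t ≤ 1 / 2 := abs_sub_round t

lemma nearestIntDist_sub_le (s t : ℝ) :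
    nearestIntDist (s - t) ≤ nearestIntDist s + nearestIntDist t :=
  calc nearestIntDist (s - t) ≤ |(s - t) - ((round s - round t : ℤ) : ℝ)| := round_le _ _
    _ = |(s - round s) - (t - round t)| := by push_cast; ring_nf
    _ ≤ nearestIntDist s + nearestIntDist t := abs_sub _ _

lemma abs_cos_pi_mul (t : ℝ) : |cos (π * t)| = cos (π * nearestIntDist t) := by
  have hshift : cos (π * t) = (-1) ^ round t * cos (π * (t - round t)) := by
    rw [← cos_add_int_mul_pi]
    ring_nf
  have hnonneg : 0 ≤ cos (π * nearestIntDist t) := by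
    refine cos_nonneg_of_mem_Icc ⟨?_, ?_⟩ <;>
      nlinarith [pi_pos, nearestIntDist_nonneg t, nearestIntDist_le_half t]
  rw [hshift, abs_mul, abs_neg_one_zpow, one_mul, ← cos_abs, abs_mul, abs_of_pos pi_pos,
    ← nearestIntDist, abs_of_nonneg hnonneg]

lemma cos_add_cos_le_two_mul_cos_half {α β δ : ℝ} (hδ : 0 ≤ δ) (hδαβ : δ ≤ α + β)
    (hαβ : α + β ≤ π) : cos α + cos β ≤ 2 * cos (δ / 2) := by
  have hmid : 0 ≤ cos ((α + β) / 2) := cos_nonneg_of_mem_Icc ⟨by linarith, by linarith⟩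
  have hmono : cos ((α + β) / 2) ≤ cos (δ / 2) :=
    cos_le_cos_of_nonneg_of_le_pi (by linarith) (by linarith) (by linarith)
  calc cos α + cos β = 2 * cos ((α + β) / 2) * cos ((α - β) / 2) := cos_add_cos _ _
    _ ≤ 2 * cos ((α + β) / 2) * 1 := by gcongr; exact cos_le_one _
    _ ≤ 2 * cos (δ / 2) := by linarith

lemma four_sub_eight_mul_sin_sq_div_two (θ : ℝ) : 4 - 8 * sin (θ / 2) ^ 2 = 4 * cos θ := by
  rw [sin_sq_eq_half_sub, mul_div_cancel₀ θ two_ne_zero]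
  ring

theorem stmt0 (x1 x2 ξ1 ξ2 : ℝ) :
    ‖e x1 + e (x1 + ξ1)‖ + ‖e x2 + e (x2 + ξ2)‖ ≤
      4 - 8 * (Real.sin (Real.pi * nearestIntDist (ξ1 - ξ2) / 4)) ^ 2 := by
  have hd := nearestIntDist_nonneg (ξ1 - ξ2)
  have hdab := nearestIntDist_sub_le ξ1 ξ2
  have ha := nearestIntDist_le_half ξ1
  have hb := nearestIntDist_le_half ξ2
  have hcos := cos_add_cos_le_two_mul_cos_half (α := π * nearestIntDist ξ1)
    (β := π * nearestIntDist ξ2) (δ := π * nearestIntDist (ξ1 - ξ2))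
    (by positivity) (by nlinarith [pi_pos]) (by nlinarith [pi_pos])
  rw [norm_e_add_e_add, norm_e_add_e_add, abs_cos_pi_mul, abs_cos_pi_mul,
    show π * nearestIntDist (ξ1 - ξ2) / 4 = π * nearestIntDist (ξ1 - ξ2) / 2 / 2 by ring,
    four_sub_eight_mul_sin_sq_div_two]
  linarith
end

section
/- Let b be a strongly block-additive q-ary function corresponding to F'. Define G(n) = Σ_{j=1}^{m-1} F'(n q^j) and F(n) = F'(n) + G(n) - G(⌊n/q⌋). Then b also corresponds to F, and Σ_{j=1}^{m-1} F(n q^j) = 0 for all n ∈ ℕ. -/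
/-!
Both identities are telescoping sums for `F = F' + G - G ∘ (· / q)`. Along `q ^ (m - 1) * n / q ^ j` the
`G`-terms collapse to `G (q ^ (m - 1) * n) - G 0`, along `n * q ^ (j + 1)` to
`G (n * q ^ (m - 1)) - G n`. Since `F'` only sees the `m` lowest digits, it vanishes on multiples
of `q ^ m`, so `G` vanishes on multiples of `q ^ (m - 1)`; what remains is `b n`, resp.
`G n - G n = 0`.
-/

open Finset

theorem eq_zero_of_dvd_of_apply_eq_apply_mod {α : Type*} [Zero α] {f : ℕ → α} {k n : ℕ}
    (h0 : f 0 = 0) (hmod : ∀ n, f n = f (n % k)) (hk : k ∣ n) : f n = 0 := by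
  rw [hmod, Nat.mod_eq_zero_of_dvd hk, h0]

section Telescoping

variable {M : Type*} [AddCommGroup M] {q : ℕ} {F F' G : ℕ → M}

theorem sum_range_apply_div_pow_of_eq_add_sub (hF : ∀ n, F n = F' n + G n - G (n / q))
    (x N : ℕ) :
    ∑ j ∈ range N, F (x / q ^ j) = ∑ j ∈ range N, F' (x / q ^ j) + (G x - G (x / q ^ N)) := by
  induction N with
  | zero => simp
  | succ N ih =>
    rw [sum_range_succ, sum_range_succ, ih, hF, Nat.div_div_eq_div_mul, ← pow_succ]
    abel

theorem sum_range_apply_mul_pow_succ_of_eq_add_sub (hq : 0 < q)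
    (hF : ∀ n, F n = F' n + G n - G (n / q)) (x N : ℕ) :
    ∑ j ∈ range N, F (x * q ^ (j + 1)) =
      ∑ j ∈ range N, F' (x * q ^ (j + 1)) + (G (x * q ^ N) - G x) := by
  induction N with
  | zero => simp
  | succ N ih =>
    rw [sum_range_succ, sum_range_succ, ih, hF, pow_succ, ← mul_assoc, Nat.mul_div_cancel _ hq]
    abel

end Telescoping

theorem stmt2_general (q m : ℕ) (hq : 2 ≤ q) (F' : ℕ → ℕ) (b : ℕ → ℕ)
    (hF'0 : F' 0 = 0) (hF'mod : ∀ n, F' n = F' (n % q ^ m))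
    (hb : ∀ n, b n = ∑ j ∈ Finset.range (m + n), F' (q ^ (m - 1) * n / q ^ j))
    (G F : ℕ → ℤ)
    (hG : ∀ n, G n = ∑ j ∈ Finset.range (m - 1), (F' (n * q ^ (j + 1)) : ℤ))
    (hF : ∀ n, F n = (F' n : ℤ) + G n - G (n / q)) :
    (∀ n, (b n : ℤ) = ∑ j ∈ Finset.range (m + n), F (q ^ (m - 1) * n / q ^ j)) ∧
      (∀ n, ∑ j ∈ Finset.range (m - 1), F (n * q ^ (j + 1)) = 0) := by
  have hq0 : 0 < q := by omega
  have hG_dvd : ∀ n, q ^ (m - 1) ∣ n → G n = 0 := by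
    intro n hn
    rw [hG]
    refine sum_eq_zero fun j _ => ?_
    have hdvd : q ^ m ∣ n * q ^ (j + 1) :=
      (pow_dvd_pow q (by omega)).trans (pow_add q (m - 1) (j + 1) ▸ mul_dvd_mul hn dvd_rfl)
    rw [eq_zero_of_dvd_of_apply_eq_apply_mod hF'0 hF'mod hdvd, Nat.cast_zero]
  refine ⟨fun n => ?_, fun n => ?_⟩
  · have hlast : q ^ (m - 1) * n / q ^ (m + n) = 0 := by
      refine Nat.div_eq_of_lt ?_
      calc q ^ (m - 1) * n < q ^ (m - 1) * q ^ n :=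
            Nat.mul_lt_mul_of_pos_left (Nat.lt_pow_self hq) (pow_pos hq0 _)
        _ ≤ q ^ (m + n) := by rw [← pow_add]; exact Nat.pow_le_pow_right hq0 (by omega)
    rw [hb, sum_range_apply_div_pow_of_eq_add_sub (F' := fun n => (F' n : ℤ)) hF, hlast,
      hG_dvd _ (dvd_mul_right _ _), hG_dvd 0 (dvd_zero _), sub_zero, add_zero, Nat.cast_sum]
  · rw [sum_range_apply_mul_pow_succ_of_eq_add_sub (F' := fun n => (F' n : ℤ)) hq0 hF, ← hG,
      hG_dvd _ (dvd_mul_left _ _)]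
    abel

/-- Given a strongly block-additive `q`-ary function `b` corresponding to `F'`
(`F'` depends only on the `m` lowest base-`q` digits, `F' 0 = 0`,
`b n = ∑_{j ≥ 0} F' (⌊q^(m-1) n / q^j⌋)`), define `G n = ∑_{j=1}^{m-1} F' (n q^j)`
and `F n = F' n + G n - G ⌊n/q⌋`.  Then `b` also corresponds to `F`, and
`∑_{j=1}^{m-1} F (n q^j) = 0` for all `n`. -/
theorem stmt2 (q m : ℕ) (hq : 2 ≤ q) (hm : 1 ≤ m) (F' : ℕ → ℕ) (b : ℕ → ℕ)
    (hF'0 : F' 0 = 0) (hF'mod : ∀ n, F' n = F' (n % q ^ m))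
    (hb : ∀ n, b n = ∑ j ∈ Finset.range (m + n), F' (q ^ (m - 1) * n / q ^ j))
    (G F : ℕ → ℤ)
    (hG : ∀ n, G n = ∑ j ∈ Finset.range (m - 1), (F' (n * q ^ (j + 1)) : ℤ))
    (hF : ∀ n, F n = (F' n : ℤ) + G n - G (n / q)) :
    (∀ n, (b n : ℤ) = ∑ j ∈ Finset.range (m + n), F (q ^ (m - 1) * n / q ^ j)) ∧
      (∀ n, ∑ j ∈ Finset.range (m - 1), F (n * q ^ (j + 1)) = 0) :=
  stmt2_general q m hq F' b hF'0 hF'mod hb G F hG hF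
end

section
/- Let b be a strongly block-additive q-ary function (with b(n) = Σ_{j≥0} F(⌊n/q^j⌋), F supported on m digits, F(0)=0) and m' > 1 an integer. The following are equivalent: (i) there exists n ∈ ℕ with m' ∤ b(n); (ii) there exists n < q^m with m' ∤ F(n); (iii) there exists n < q^m with m' ∤ b(n). -/
/-!
Every term of `b n` is a value of `F`, and `F` takes all its values below `q ^ m`, so (i) gives
(ii). Conversely, if `N` is the least argument with `m' ∤ F N`, then `N < q ^ m` and
`b N = F N + ∑_{j ≥ 1} F (N / q ^ j)`, where every later term has argument below `N`, hence is
divisible by `m'`; so `m' ∤ b N`.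
-/

open Finset

theorem dvd_of_forall_lt_of_eq_mod {F : ℕ → ℕ} {p d : ℕ} (hp : 0 < p)
    (hF : ∀ n, F n = F (n % p)) (h : ∀ n < p, d ∣ F n) (n : ℕ) : d ∣ F n :=
  hF n ▸ h _ (Nat.mod_lt n hp)

theorem dvd_sum_div_pow_iff {F : ℕ → ℕ} {q d N L : ℕ} (hq : 1 < q) (hN : 0 < N) (hL : 0 < L)
    (hsmall : ∀ k < N, d ∣ F k) : d ∣ ∑ j ∈ range L, F (N / q ^ j) ↔ d ∣ F N := by
  obtain ⟨L, rfl⟩ : ∃ L', L = L' + 1 := ⟨L - 1, by omega⟩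
  rw [sum_range_succ', pow_zero, Nat.div_one]
  exact Nat.dvd_add_right <| dvd_sum fun j _ =>
    hsmall _ (Nat.div_lt_self hN (Nat.one_lt_pow (Nat.succ_ne_zero j) hq))

theorem stmt4_general (q m m' : ℕ) (hq : 2 ≤ q)
    (F b : ℕ → ℕ) (hF0 : F 0 = 0) (hFmod : ∀ n, F n = F (n % q ^ m))
    (hb : ∀ n, b n = ∑ j ∈ Finset.range (m + n), F (n / q ^ j)) :
    List.TFAE [∃ n : ℕ, ¬ m' ∣ b n,
               ∃ n : ℕ, n < q ^ m ∧ ¬ m' ∣ F n,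
               ∃ n : ℕ, n < q ^ m ∧ ¬ m' ∣ b n] := by
  tfae_have 3 → 1 := fun ⟨n, _, h⟩ => ⟨n, h⟩
  tfae_have 1 → 2 := by
    rintro ⟨n, hn⟩
    by_contra! hsmall
    exact hn <| hb n ▸ dvd_sum fun j _ =>
      dvd_of_forall_lt_of_eq_mod (pow_pos (by omega) m) hFmod hsmall _
  tfae_have 2 → 3 := by
    rintro ⟨n, hn, hFn⟩
    have hex : ∃ k, ¬ m' ∣ F k := ⟨n, hFn⟩
    have hN : ¬ m' ∣ F (Nat.find hex) := Nat.find_spec hex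
    have hN0 : Nat.find hex ≠ 0 := fun h => hN (by rw [h, hF0]; exact dvd_zero m')
    refine ⟨Nat.find hex, (Nat.find_min' hex hFn).trans_lt hn, ?_⟩
    rwa [hb, dvd_sum_div_pow_iff hq (Nat.pos_of_ne_zero hN0) (by omega)
      fun k hk => not_not.mp (Nat.find_min hex hk)]
  tfae_finish

/-- For a strongly block-additive `q`-ary function `b` and `m' > 1`, the following are
equivalent: (i) some `n` with `m' ∤ b n`; (ii) some `n < q^m` with `m' ∤ F n`;
(iii) some `n < q^m` with `m' ∤ b n`. -/
theorem stmt4 (q m m' : ℕ) (hq : 2 ≤ q) (hm : 1 ≤ m) (hm' : 1 < m')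
    (F b : ℕ → ℕ) (hF0 : F 0 = 0) (hFmod : ∀ n, F n = F (n % q ^ m))
    (hb : ∀ n, b n = ∑ j ∈ Finset.range (m + n), F (n / q ^ j)) :
    List.TFAE [∃ n : ℕ, ¬ m' ∣ b n,
               ∃ n : ℕ, n < q ^ m ∧ ¬ m' ∣ F n,
               ∃ n : ℕ, n < q ^ m ∧ ¬ m' ∣ b n] :=
  stmt4_general q m m' hq F b hF0 hFmod hb
end

section
/- Let M_ℓ (ℓ ∈ ℕ) be N×N complex matrices whose absolute row sums are all ≤ 1. Suppose there exist integers m0, m1 ≥ 1 and constants c0 > 0, η > 0 such that: (1) every product A of m0 consecutive matrices M_ℓ satisfies, for each row i, either |A_{i,1}| ≥ c0 or Σ_j |A_{i,j}| ≤ 1-η; and (2) every product B of m1 consecutive matrices M_ℓ satisfies Σ_j |B_{1,j}| ≤ 1-η. Then there exist constants C > 0 and δ > 0 such that ‖Π_{ℓ=r}^{r+k-1} M_ℓ‖_∞ ≤ C q^{-δk} uniformly for all r ≥ 0 and k ≥ 0. -/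
/-!
Group the matrices into blocks of `m₀ + m₁` consecutive factors. A row of a block either has
its first `m₀`-product row summing to at most `1 - η`, or that row puts mass at least `c₀` on
the first column, which the next `m₁`-product then shrinks by `η`; either way every block has
row sums at most `ρ = 1 - η · min c₀ 1 < 1`. Since all products have row sums at most `1`,
a product of `k` factors has row sums at most `ρ ^ ⌊k / (m₀ + m₁)⌋`, which is exponential decay.
-/

open Finset

theorem pow_div_le_inv_mul_rpow {ρ : ℝ} (h0 : 0 < ρ) (h1 : ρ ≤ 1) (k m : ℕ) :
    ρ ^ (k / m) ≤ ρ⁻¹ * ρ ^ ((k : ℝ) / m) := by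
  rw [← Real.rpow_neg_one, ← Real.rpow_add h0, ← Real.rpow_natCast,
    ← Nat.floor_div_eq_div (K := ℝ)]
  exact Real.rpow_le_rpow_of_exponent_ge h0 h1 (by linarith [Nat.sub_one_lt_floor ((k : ℝ) / m)])

theorem exists_pow_div_le_mul_rpow_neg {ρ q : ℝ} (h0 : 0 ≤ ρ) (h1 : ρ < 1) {m : ℕ} (hm : 0 < m)
    (hq : 1 < q) : ∃ C : ℝ, 0 < C ∧ ∃ δ : ℝ, 0 < δ ∧ ∀ k : ℕ, ρ ^ (k / m) ≤ C * q ^ (-(δ * k)) := by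
  -- `ρ` may vanish; enlarging it to `ρ' > 0` lets us take logarithms.
  set ρ' := max ρ (1 / 2)
  have hρ'0 : 0 < ρ' := lt_max_of_lt_right (by norm_num)
  have hρ'1 : ρ' < 1 := max_lt h1 (by norm_num)
  have hlogq : 0 < Real.log q := Real.log_pos hq
  have hm' : (0 : ℝ) < m := Nat.cast_pos.2 hm
  refine ⟨ρ'⁻¹, inv_pos.2 hρ'0, -Real.log ρ' / (m * Real.log q),
    div_pos (neg_pos.2 (Real.log_neg hρ'0 hρ'1)) (mul_pos hm' hlogq), fun k => ?_⟩
  have hrpow : q ^ (-(-Real.log ρ' / (m * Real.log q) * k)) = ρ' ^ ((k : ℝ) / m) := by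
    rw [Real.rpow_def_of_pos (by linarith), Real.rpow_def_of_pos hρ'0]
    congr 1
    field_simp
  calc ρ ^ (k / m) ≤ ρ' ^ (k / m) := pow_le_pow_left₀ h0 (le_max_left _ _) _
    _ ≤ ρ'⁻¹ * ρ' ^ ((k : ℝ) / m) := pow_div_le_inv_mul_rpow hρ'0 hρ'1.le k m
    _ = _ := by rw [hrpow]

section RowSums

variable {l m n R : Type*} [Fintype m] [Fintype n] [NormedRing R]

theorem sum_norm_mul_apply_le (X : Matrix l m R) (Y : Matrix m n R) (i : l) {s : m → ℝ}
    (hY : ∀ k, ∑ j, ‖Y k j‖ ≤ s k) : ∑ j, ‖(X * Y) i j‖ ≤ ∑ k, ‖X i k‖ * s k :=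
  calc ∑ j, ‖(X * Y) i j‖ ≤ ∑ j, ∑ k, ‖X i k‖ * ‖Y k j‖ :=
        sum_le_sum fun j _ => (norm_sum_le _ _).trans (sum_le_sum fun k _ => norm_mul_le _ _)
    _ = ∑ k, ‖X i k‖ * ∑ j, ‖Y k j‖ := by rw [sum_comm]; simp only [mul_sum]
    _ ≤ ∑ k, ‖X i k‖ * s k := sum_le_sum fun k _ => mul_le_mul_of_nonneg_left (hY k) (norm_nonneg _)

theorem sum_norm_mul_apply_le_mul {X : Matrix l m R} {Y : Matrix m n R} {i : l} {a b : ℝ}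
    (hX : ∑ k, ‖X i k‖ ≤ a) (hY : ∀ k, ∑ j, ‖Y k j‖ ≤ b) (hb : 0 ≤ b) :
    ∑ j, ‖(X * Y) i j‖ ≤ a * b :=
  calc ∑ j, ‖(X * Y) i j‖ ≤ ∑ k, ‖X i k‖ * b := sum_norm_mul_apply_le X Y i hY
    _ = (∑ k, ‖X i k‖) * b := sum_mul .. |>.symm
    _ ≤ a * b := mul_le_mul_of_nonneg_right hX hb

theorem sum_norm_mul_apply_le_one_sub [DecidableEq m] {X : Matrix l m R} {Y : Matrix m n R}
    {i : l} {k₀ : m} {c η : ℝ} (hX : ∑ k, ‖X i k‖ ≤ 1) (hc : c ≤ ‖X i k₀‖) (hη : 0 ≤ η)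
    (hY : ∀ k, ∑ j, ‖Y k j‖ ≤ 1) (hYk₀ : ∑ j, ‖Y k₀ j‖ ≤ 1 - η) :
    ∑ j, ‖(X * Y) i j‖ ≤ 1 - η * c := by
  have hs : ∀ k, ∑ j, ‖Y k j‖ ≤ 1 - if k = k₀ then η else 0 := by
    intro k
    split_ifs with hk
    · exact hk ▸ hYk₀
    · simpa using hY k
  calc ∑ j, ‖(X * Y) i j‖ ≤ ∑ k, ‖X i k‖ * (1 - if k = k₀ then η else 0) :=
        sum_norm_mul_apply_le X Y i hs
    _ = ∑ k, ‖X i k‖ - ‖X i k₀‖ * η := by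
        simp only [mul_sub, mul_one, sum_sub_distrib, mul_ite, mul_zero, sum_ite_eq', mem_univ,
          if_true]
    _ ≤ 1 - η * c := by nlinarith

end RowSums

def consecutiveProd {α : Type*} [Monoid α] (M : ℕ → α) (r k : ℕ) : α :=
  ((List.range k).map fun t => M (r + t)).prod

section ConsecutiveProd

variable {α : Type*} [Monoid α] (M : ℕ → α)

@[simp]
theorem consecutiveProd_zero (r : ℕ) : consecutiveProd M r 0 = 1 := rfl

theorem consecutiveProd_add (r a b : ℕ) :
    consecutiveProd M r (a + b) = consecutiveProd M r a * consecutiveProd M (r + a) b := by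
  simp only [consecutiveProd, List.range_add, List.map_append, List.prod_append, List.map_map,
    Function.comp_def, add_assoc]

theorem consecutiveProd_succ (r k : ℕ) :
    consecutiveProd M r (k + 1) = consecutiveProd M r k * M (r + k) := by
  simp [consecutiveProd, List.range_succ]

end ConsecutiveProd

section Decay

variable {n R : Type*} [Fintype n] [DecidableEq n] [NormedRing R] [NormOneClass R]
  {M : ℕ → Matrix n n R}

theorem sum_norm_consecutiveProd_le_one (hM : ∀ ℓ i, ∑ j, ‖M ℓ i j‖ ≤ 1) (r k : ℕ) (i : n) :
    ∑ j, ‖consecutiveProd M r k i j‖ ≤ 1 := by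
  induction k generalizing i with
  | zero => simp [Matrix.one_apply, apply_ite norm]
  | succ k ih =>
    rw [consecutiveProd_succ, ← mul_one 1]
    exact sum_norm_mul_apply_le_mul (ih i) (hM (r + k)) zero_le_one

theorem sum_norm_consecutiveProd_add_le (hM : ∀ ℓ i, ∑ j, ‖M ℓ i j‖ ≤ 1) {m₀ m₁ : ℕ} {k₀ : n}
    {c η : ℝ} (hη : 0 ≤ η)
    (h₀ : ∀ r i, c ≤ ‖consecutiveProd M r m₀ i k₀‖ ∨ ∑ j, ‖consecutiveProd M r m₀ i j‖ ≤ 1 - η)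
    (h₁ : ∀ r, ∑ j, ‖consecutiveProd M r m₁ k₀ j‖ ≤ 1 - η) (r : ℕ) (i : n) :
    ∑ j, ‖consecutiveProd M r (m₀ + m₁) i j‖ ≤ 1 - η * min c 1 := by
  have hone := sum_norm_consecutiveProd_le_one hM
  rw [consecutiveProd_add]
  rcases h₀ r i with hc | hrow
  · calc _ ≤ 1 - η * c :=
          sum_norm_mul_apply_le_one_sub (hone r m₀ i) hc hη (hone _ m₁) (h₁ _)
      _ ≤ 1 - η * min c 1 := by gcongr; exact min_le_left _ _
  · calc _ ≤ (1 - η) * 1 := sum_norm_mul_apply_le_mul hrow (hone _ m₁) zero_le_one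
      _ ≤ 1 - η * min c 1 := by nlinarith [min_le_right c 1]

theorem sum_norm_consecutiveProd_le_pow_div (hM : ∀ ℓ i, ∑ j, ‖M ℓ i j‖ ≤ 1) {m : ℕ} {ρ : ℝ}
    (hρ : 0 ≤ ρ) (hblock : ∀ r i, ∑ j, ‖consecutiveProd M r m i j‖ ≤ ρ) (r k : ℕ) (i : n) :
    ∑ j, ‖consecutiveProd M r k i j‖ ≤ ρ ^ (k / m) := by
  suffices h : ∀ a b r i, ∑ j, ‖consecutiveProd M r (m * a + b) i j‖ ≤ ρ ^ a by
    simpa only [Nat.div_add_mod] using h (k / m) (k % m) r i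
  intro a b
  induction a with
  | zero => intro r i; simpa using sum_norm_consecutiveProd_le_one hM r b i
  | succ a ih =>
    intro r i
    rw [show m * (a + 1) + b = m + (m * a + b) by ring, consecutiveProd_add, pow_succ']
    exact sum_norm_mul_apply_le_mul (hblock r i) (ih _) (pow_nonneg hρ a)

end Decay

theorem stmt7_general (N q : ℕ) (hN : 0 < N) (hq : 2 ≤ q)
    (M : ℕ → Matrix (Fin N) (Fin N) ℂ)
    (prodM : ℕ → ℕ → Matrix (Fin N) (Fin N) ℂ)
    (hprod : ∀ r k, prodM r k = (((List.range k).map fun t => M (r + t)).prod))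
    (hrow : ∀ ℓ i, ∑ j, ‖M ℓ i j‖ ≤ 1)
    (m0 m1 : ℕ) (hm0 : 1 ≤ m0)
    (c0 η : ℝ) (hc0 : 0 < c0) (hη : 0 < η)
    (hcond1 : ∀ r, ∀ i : Fin N,
      c0 ≤ ‖prodM r m0 i ⟨0, hN⟩‖ ∨
        ∑ j, ‖prodM r m0 i j‖ ≤ 1 - η)
    (hcond2 : ∀ r, ∑ j, ‖prodM r m1 ⟨0, hN⟩ j‖ ≤ 1 - η) :
    ∃ C : ℝ, 0 < C ∧ ∃ δ : ℝ, 0 < δ ∧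
      ∀ r k : ℕ, ∀ i : Fin N,
        ∑ j, ‖prodM r k i j‖ ≤ C * (q : ℝ) ^ (-(δ * k)) := by
  obtain rfl : prodM = consecutiveProd M := funext fun r => funext (hprod r)
  have hblock := sum_norm_consecutiveProd_add_le hrow hη.le hcond1 hcond2
  have hρ0 : 0 ≤ 1 - η * min c0 1 :=
    (sum_nonneg fun j _ => norm_nonneg _).trans (hblock 0 ⟨0, hN⟩)
  have hρ1 : 1 - η * min c0 1 < 1 := by nlinarith [lt_min hc0 one_pos]
  obtain ⟨C, hC, δ, hδ, hdecay⟩ := exists_pow_div_le_mul_rpow_neg hρ0 hρ1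
    (by omega : 0 < m0 + m1) (Nat.one_lt_cast.2 hq)
  exact ⟨C, hC, δ, hδ, fun r k i =>
    (sum_norm_consecutiveProd_le_pow_div hrow hρ0 hblock r k i).trans (hdecay k)⟩

/-- Exponential decay of products of matrices with row sums ≤ 1 under the two
structural conditions; `prodM M r k = M r * M (r+1) * ⋯ * M (r+k-1)`, and the
conclusion bounds every absolute row sum (i.e. the row-sum norm) of the product. -/
theorem stmt7 (N q : ℕ) (hN : 0 < N) (hq : 2 ≤ q)
    (M : ℕ → Matrix (Fin N) (Fin N) ℂ)
    (prodM : ℕ → ℕ → Matrix (Fin N) (Fin N) ℂ)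
    (hprod : ∀ r k, prodM r k = (((List.range k).map fun t => M (r + t)).prod))
    (hrow : ∀ ℓ i, ∑ j, ‖M ℓ i j‖ ≤ 1)
    (m0 m1 : ℕ) (hm0 : 1 ≤ m0) (hm1 : 1 ≤ m1)
    (c0 η : ℝ) (hc0 : 0 < c0) (hη : 0 < η)
    (hcond1 : ∀ r, ∀ i : Fin N,
      c0 ≤ ‖prodM r m0 i ⟨0, hN⟩‖ ∨
        ∑ j, ‖prodM r m0 i j‖ ≤ 1 - η)
    (hcond2 : ∀ r, ∑ j, ‖prodM r m1 ⟨0, hN⟩ j‖ ≤ 1 - η) :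
    ∃ C : ℝ, 0 < C ∧ ∃ δ : ℝ, 0 < δ ∧
      ∀ r k : ℕ, ∀ i : Fin N,
        ∑ j, ‖prodM r k i j‖ ≤ C * (q : ℝ) ^ (-(δ * k)) :=
  stmt7_general N q hN hq M prodM hprod hrow m0 m1 hm0 c0 η hc0 hη hcond1 hcond2
end

section
/- For all integers a, b, m with m ≥ 1, the complete quadratic Gauss sum satisfies |Σ_{n=0}^{m-1} e((an² + bn)/m)| ≤ √(2m·gcd(a,m)). -/
/-!
Weyl differencing. Writing the sum as `S = ∑ₓ ψ(q x)` over `ZMod m` with the standard additive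
character `ψ` and `q x = a x² + b x`, the substitution `x = y + h` in `S · conj S` gives
`q (y + h) - q y = 2ahy + q h`, and the inner sum over `y` vanishes unless `2ah = 0`. Hence
`|S|² ≤ m · #{h | 2ah = 0}`, and by Bézout every such `h` is killed by `2 gcd(a, m)`, so in the
cyclic group `ZMod m` there are at most `2 gcd(a, m)` of them.
-/

open Finset

lemma e_intCast_div (m : ℕ) [NeZero m] (k : ℤ) :
    e (k / m) = ZMod.stdAddChar (k : ZMod m) := by
  rw [ZMod.stdAddChar_coe, e]
  push_cast
  ring_nf

lemma sum_range_eq_sum_zmod {M : Type*} [AddCommMonoid M] (m : ℕ) [NeZero m]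
    (f : ZMod m → M) : ∑ n ∈ range m, f n = ∑ x, f x := by
  exact sum_nbij' (↑) ZMod.val (by simp) (by simp [ZMod.val_lt])
    (fun n hn => ZMod.val_cast_of_lt (mem_range.mp hn)) (fun x _ => ZMod.natCast_zmod_val x)
    (fun _ _ => rfl)

namespace AddChar

variable {R : Type*} [CommRing R] [Fintype R] [DecidableEq R] {ψ : AddChar R ℂ}

lemma sum_quadratic_mul_conj (hψ : ψ.IsPrimitive) (a b : R) :
    (∑ x, ψ (a * x ^ 2 + b * x)) * starRingEnd ℂ (∑ x, ψ (a * x ^ 2 + b * x)) =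
      Fintype.card R * ∑ h ∈ {h | 2 * a * h = 0}, ψ (a * h ^ 2 + b * h) := by
  set q : R → R := fun x => a * x ^ 2 + b * x
  have hdiff : ∀ h y, q (h + y) - q y = y * (2 * a * h) + q h := fun h y => by
    simp only [q]; ring
  calc (∑ x, ψ (q x)) * starRingEnd ℂ (∑ y, ψ (q y))
      = ∑ y, ∑ x, ψ (q x - q y) := by
        simp only [map_sum, ← map_neg_eq_conj, Finset.sum_mul_sum, sub_eq_add_neg, map_add_eq_mul]
        exact Finset.sum_comm
    _ = ∑ y, ∑ h, ψ (q (h + y) - q y) := by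
        refine Finset.sum_congr rfl fun y _ => ?_
        exact (Equiv.sum_comp (Equiv.addRight y) fun x => ψ (q x - q y)).symm
    _ = ∑ h, ψ (q h) * ∑ y, ψ (y * (2 * a * h)) := by
        simp only [hdiff, map_add_eq_mul, Finset.mul_sum]
        rw [Finset.sum_comm]
        simp only [mul_comm]
    _ = _ := by
        rw [Finset.mul_sum, Finset.sum_filter]
        refine Finset.sum_congr rfl fun h _ => ?_
        rw [sum_mulShift _ hψ]
        split_ifs <;> simp [q, mul_comm]

lemma norm_sum_quadratic_sq_le (hψ : ψ.IsPrimitive) (a b : R) :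
    ‖∑ x, ψ (a * x ^ 2 + b * x)‖ ^ 2 ≤ Fintype.card R * #{h | 2 * a * h = 0} := by
  have hnorm : (‖∑ x, ψ (a * x ^ 2 + b * x)‖ ^ 2 : ℝ) =
      ‖(Fintype.card R : ℂ) * ∑ h ∈ {h | 2 * a * h = 0}, ψ (a * h ^ 2 + b * h)‖ := by
    rw [← sum_quadratic_mul_conj hψ, Complex.mul_conj', ← Complex.ofReal_pow, Complex.norm_real,
      Real.norm_of_nonneg (by positivity)]
  rw [hnorm, norm_mul, Complex.norm_natCast]
  gcongr
  refine (norm_sum_le _ _).trans_eq ?_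
  simp [AddChar.norm_apply]

end AddChar

lemma card_two_mul_intCast_mul_eq_zero_le (m : ℕ) [NeZero m] (a : ℤ) :
    #{h : ZMod m | 2 * (a : ZMod m) * h = 0} ≤ 2 * Int.gcd a m := by
  have hbezout : ((Int.gcd a m : ℕ) : ZMod m) = a * (a.gcdA m : ZMod m) := by
    have := congrArg (Int.cast : ℤ → ZMod m) (Int.gcd_eq_gcd_ab a m)
    push_cast at this
    simpa using this
  have hpos : 0 < 2 * Int.gcd a m := by
    have : 0 < Int.gcd a m := Int.gcd_pos_of_ne_zero_right _ (by exact_mod_cast NeZero.ne m)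
    omega
  refine le_trans (Finset.card_le_card fun h => ?_) (IsAddCyclic.card_nsmul_eq_zero_le hpos)
  simp only [Finset.mem_filter, Finset.mem_univ, true_and, nsmul_eq_mul]
  intro h2ah
  push_cast
  rw [hbezout]
  linear_combination (a.gcdA m : ZMod m) * h2ah

/-- Complete quadratic Gauss sum bound. -/
theorem stmt9 (a b : ℤ) (m : ℕ) (hm : 1 ≤ m) :
    ‖∑ n ∈ Finset.range m, e (((a * n ^ 2 + b * n : ℤ) : ℝ) / m)‖ ≤
      Real.sqrt (2 * m * Int.gcd a m) := by
  have : NeZero m := ⟨by omega⟩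
  have hsum : ∑ n ∈ range m, e (((a * n ^ 2 + b * n : ℤ) : ℝ) / m) =
      ∑ x : ZMod m, ZMod.stdAddChar ((a : ZMod m) * x ^ 2 + (b : ZMod m) * x) := by
    rw [← sum_range_eq_sum_zmod]
    refine Finset.sum_congr rfl fun n _ => ?_
    rw [e_intCast_div]
    push_cast
    rfl
  rw [hsum]
  refine Real.le_sqrt_of_sq_le ?_
  calc _ ≤ (Fintype.card (ZMod m) : ℝ) * #{h : ZMod m | 2 * (a : ZMod m) * h = 0} :=
        AddChar.norm_sum_quadratic_sq_le (ZMod.isPrimitive_stdAddChar m) _ _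
    _ ≤ m * (2 * Int.gcd a m : ℕ) := by
        rw [ZMod.card]
        gcongr
        exact card_two_mul_intCast_mul_eq_zero_le m a
    _ = 2 * m * Int.gcd a m := by push_cast; ring
end

section
/- For all integers a, b, m, N, n0 with m ≥ 1 and N ≥ 0, the incomplete quadratic Gauss sum satisfies |Σ_{n=n0+1}^{n0+N} e((an² + bn)/m)| ≤ (N/m + 1 + (2/π)·log(2m/π))·√(2m·gcd(a,m)). -/
open Finset Real ZMod

theorem norm_sq_sum_addChar_quadratic_le {R : Type*} [CommRing R] [Fintype R] [DecidableEq R]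
    {ψ : AddChar R ℂ} (hψ : ψ.IsPrimitive) (a c : R) :
    ‖∑ x, ψ (a * x ^ 2 + c * x)‖ ^ 2 ≤ Fintype.card R * #{d | 2 * a * d = 0} := by
  set f : R → R := fun x ↦ a * x ^ 2 + c * x
  have expand : (∑ x, ψ (f x)) * starRingEnd ℂ (∑ x, ψ (f x))
      = ∑ d, ψ (f d) * ∑ y, ψ (y * (2 * a * d)) := by
    calc (∑ x, ψ (f x)) * starRingEnd ℂ (∑ x, ψ (f x))
        = ∑ y, ∑ x, ψ (f x - f y) := by
          simp only [map_sum, sum_mul_sum, sub_eq_add_neg, AddChar.map_add_eq_mul,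
            AddChar.map_neg_eq_conj]
          exact sum_comm
      _ = ∑ y, ∑ d, ψ (f (y + d) - f y) :=
          sum_congr rfl fun y _ ↦ (Fintype.sum_equiv (Equiv.addLeft y) _ _ fun _ ↦ rfl).symm
      _ = ∑ d, ψ (f d) * ∑ y, ψ (y * (2 * a * d)) := by
          simp only [mul_sum, ← AddChar.map_add_eq_mul]
          rw [sum_comm]
          refine sum_congr rfl fun d _ ↦ sum_congr rfl fun y _ ↦ congrArg ψ ?_
          simp only [f]
          ring
  calc ‖∑ x, ψ (f x)‖ ^ 2 = ‖∑ d, ψ (f d) * ∑ y, ψ (y * (2 * a * d))‖ := by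
        rw [← expand, norm_mul, Complex.norm_conj, sq]
    _ ≤ ∑ d, ‖ψ (f d) * ∑ y, ψ (y * (2 * a * d))‖ := norm_sum_le _ _
    _ = ∑ d, if 2 * a * d = 0 then (Fintype.card R : ℝ) else 0 := by
        refine sum_congr rfl fun d _ ↦ ?_
        rw [norm_mul, AddChar.norm_apply, one_mul, AddChar.sum_mulShift _ hψ]
        split_ifs <;> simp
    _ = Fintype.card R * #{d | 2 * a * d = 0} := by
        rw [sum_ite, sum_const_zero, add_zero, sum_const, nsmul_eq_mul, mul_comm]

theorem Int.gcd_two_mul_le (a : ℤ) {m : ℕ} (hm : m ≠ 0) : Int.gcd (2 * a) m ≤ 2 * Int.gcd a m := by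
  apply Nat.le_of_dvd (by simp [Nat.pos_iff_ne_zero, Int.gcd_eq_zero_iff, hm])
  calc Int.gcd (2 * a) m ∣ Int.gcd (2 * a) (2 * m) := Int.gcd_dvd_gcd_mul_left_right _ _ _
    _ = 2 * Int.gcd a m := by rw [Int.gcd_mul_left]; rfl

theorem Finset.sum_Icc_add_one_eq_sum_range {M : Type*} [AddCommMonoid M] (f : ℤ → M) (c : ℤ)
    (N : ℕ) : ∑ n ∈ Icc (c + 1) (c + N), f n = ∑ j ∈ range N, f (c + 1 + j) := by
  rw [Int.Icc_eq_finset_map, sum_map, show (c + N + 1 - (c + 1)).toNat = N by omega]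
  rfl

theorem norm_geom_sum_le_of_norm_eq_one {K : Type*} [NormedField K] {z : K} (hz : ‖z‖ = 1)
    (hz1 : z ≠ 1) (N : ℕ) : ‖∑ j ∈ range N, z ^ j‖ ≤ 2 / ‖z - 1‖ := by
  rw [geom_sum_eq hz1, norm_div]
  gcongr
  calc ‖z ^ N - 1‖ ≤ ‖z ^ N‖ + ‖(1 : K)‖ := norm_sub_le _ _
    _ = 2 := by rw [norm_pow, hz, one_pow, norm_one]; norm_num

theorem Real.pi_mul_mul_one_sub_le_sin {t : ℝ} (ht0 : 0 ≤ t) (ht1 : t ≤ 1) :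
    π * t * (1 - t) ≤ sin (π * t) := by
  wlog ht : t ≤ 1 / 2 generalizing t
  · have h := this (t := 1 - t) (by linarith) (by linarith) (by linarith)
    rw [mul_sub π 1, mul_one, sin_pi_sub] at h
    linarith
  have hcube : (π * t) ^ 3 / 6 ≤ π * t * t := by
    have : π ^ 2 * t ≤ 6 := by nlinarith [pi_lt_d2, pi_pos]
    have : 0 ≤ π * t * t := by positivity
    nlinarith
  nlinarith [sin_ge_sub_cube (mul_nonneg pi_pos.le ht0)]

theorem Real.one_div_sin_pi_mul_le {t : ℝ} (ht0 : 0 < t) (ht1 : t < 1) :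
    1 / sin (π * t) ≤ (1 / t + 1 / (1 - t)) / π := by
  have ht1' : 0 < 1 - t := by linarith
  have hpos : 0 < π * t * (1 - t) := by have := pi_pos; positivity
  calc 1 / sin (π * t) ≤ 1 / (π * t * (1 - t)) :=
        one_div_le_one_div_of_le hpos (pi_mul_mul_one_sub_le_sin ht0.le ht1.le)
    _ = (1 / t + 1 / (1 - t)) / π := by
        field_simp
        ring

theorem sum_Ico_one_inv_le_one_add_log (m : ℕ) : ∑ k ∈ Ico 1 m, (k : ℝ)⁻¹ ≤ 1 + log m := by
  have harm : ∑ k ∈ Ico 1 m, (k : ℝ)⁻¹ = harmonic (m - 1) := by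
    rw [harmonic, sum_Ico_eq_sum_range]
    push_cast
    simp only [add_comm]
  rw [harm]
  refine (harmonic_le_one_add_log _).trans ?_
  rcases Nat.lt_or_ge m 2 with hm | hm
  · interval_cases m <;> simp
  · gcongr
    · exact Nat.cast_pos.mpr (by omega)
    · omega

theorem sum_Ico_one_div_sin_pi_div_le (m : ℕ) :
    ∑ k ∈ Ico 1 m, 1 / sin (π * k / m) ≤ 2 * m / π * (1 + log m) := by
  have reflect : ∑ k ∈ Ico 1 m, ((m : ℝ) - k)⁻¹ = ∑ k ∈ Ico 1 m, (k : ℝ)⁻¹ := by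
    have := sum_Ico_reflect (fun k : ℕ ↦ (k : ℝ)⁻¹) 1 (Nat.le_succ m)
    rw [Nat.add_sub_cancel, Nat.add_sub_cancel_left] at this
    rw [← this]
    refine sum_congr rfl fun k hk ↦ ?_
    rw [Nat.cast_sub (mem_Ico.mp hk).2.le]
  calc ∑ k ∈ Ico 1 m, 1 / sin (π * k / m)
      ≤ ∑ k ∈ Ico 1 m, m / π * ((k : ℝ)⁻¹ + ((m : ℝ) - k)⁻¹) := by
        refine sum_le_sum fun k hk ↦ ?_
        obtain ⟨hk1, hkm⟩ := mem_Ico.mp hk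
        have hk : (0 : ℝ) < k := Nat.cast_pos.mpr hk1
        have hkm : (k : ℝ) < m := Nat.cast_lt.mpr hkm
        have hm : (0 : ℝ) < m := hk.trans hkm
        have hmk : (m : ℝ) - k ≠ 0 := by linarith
        calc 1 / sin (π * k / m) = 1 / sin (π * (k / m)) := by rw [mul_div_assoc]
          _ ≤ (1 / (k / m) + 1 / (1 - k / m)) / π :=
              one_div_sin_pi_mul_le (by positivity) ((div_lt_one hm).mpr hkm)
          _ = m / π * ((k : ℝ)⁻¹ + ((m : ℝ) - k)⁻¹) := by field_simp
    _ = 2 * m / π * ∑ k ∈ Ico 1 m, (k : ℝ)⁻¹ := by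
        rw [← mul_sum, sum_add_distrib, reflect]
        ring
    _ ≤ 2 * m / π * (1 + log m) := by
        gcongr
        exact sum_Ico_one_inv_le_one_add_log m

theorem two_div_pi_mul_one_add_log_le {x : ℝ} (hx : 0 < x) :
    2 / π * (1 + log x) ≤ 1 + 2 / π * log (2 * x / π) := by
  have hlog : log (2 * x / π) = log x - log (π / 2) := by
    rw [log_div (by positivity) pi_ne_zero, log_mul two_ne_zero hx.ne',
      log_div pi_ne_zero two_ne_zero]
    ring
  have hπ : log (π / 2) ≤ π / 2 - 1 := log_le_sub_one_of_pos (by positivity)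
  have : 2 / π * (π / 2 - 1) = 1 - 2 / π := by field_simp
  rw [hlog]
  nlinarith [mul_le_mul_of_nonneg_left hπ (by positivity : (0 : ℝ) ≤ 2 / π)]

namespace ZMod

variable {m : ℕ} [NeZero m]

theorem sum_eq_sum_range {M : Type*} [AddCommMonoid M] (F : ZMod m → M) :
    ∑ h, F h = ∑ k ∈ range m, F k :=
  sum_nbij' ZMod.val (↑) (fun h _ ↦ mem_range.mpr (ZMod.val_lt h)) (fun _ _ ↦ mem_univ _)
    (fun h _ ↦ ZMod.natCast_zmod_val h) (fun k hk ↦ ZMod.val_cast_of_lt (mem_range.mp hk))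
    (fun h _ ↦ by rw [ZMod.natCast_zmod_val])

theorem card_filter_intCast_mul_eq_zero (A : ℤ) :
    #{d : ZMod m | (A : ZMod m) * d = 0} = Int.gcd A m := by
  have hker (d : ZMod m) :
      (A : ZMod m) * d = 0 ↔ d ∈ (nsmulAddMonoidHom (α := ZMod m) A.natAbs).ker := by
    rw [AddMonoidHom.mem_ker, nsmulAddMonoidHom_apply, nsmul_eq_mul]
    rcases Int.natAbs_eq A with h | h <;> rw [h] <;> simp
  have := IsAddCyclic.card_nsmulAddMonoidHom_ker (ZMod m) A.natAbs
  rw [Nat.card_zmod, Nat.card_eq_fintype_card, Fintype.card_subtype] at this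
  rw [filter_congr fun d _ ↦ hker d, this, Int.gcd, Nat.gcd_comm]
  rfl

theorem norm_sum_stdAddChar_quadratic_le (a : ℤ) (c : ZMod m) :
    ‖∑ x, stdAddChar ((a : ZMod m) * x ^ 2 + c * x)‖ ≤ √(2 * m * Int.gcd a m) := by
  apply le_sqrt_of_sq_le
  have hsq := norm_sq_sum_addChar_quadratic_le (isPrimitive_stdAddChar m) (a : ZMod m) c
  have hgcd : (Int.gcd (2 * a) m : ℝ) ≤ 2 * Int.gcd a m := by
    exact_mod_cast Int.gcd_two_mul_le a (NeZero.ne m)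
  rw [ZMod.card, show 2 * (a : ZMod m) = ((2 * a : ℤ) : ZMod m) by push_cast; rfl,
    card_filter_intCast_mul_eq_zero] at hsq
  nlinarith [(Nat.cast_nonneg m : (0 : ℝ) ≤ m)]

theorem dft_stdAddChar_quadratic (a b k : ZMod m) :
    𝓕 (fun x ↦ stdAddChar (a * x ^ 2 + b * x)) k
      = ∑ x, stdAddChar (a * x ^ 2 + (b - k) * x) := by
  simp only [dft_apply, smul_eq_mul, ← AddChar.map_add_eq_mul]
  exact sum_congr rfl fun x _ ↦ congrArg _ (by ring)

theorem norm_sum_le_of_norm_dft_le {ι : Type*} (s : Finset ι) (φ : ι → ZMod m)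
    (Φ : ZMod m → ℂ) {B : ℝ} (hB : ∀ k, ‖𝓕 Φ k‖ ≤ B) :
    ‖∑ i ∈ s, Φ (φ i)‖ ≤ B / m * ∑ h, ‖∑ i ∈ s, stdAddChar (h * φ i)‖ := by
  have inversion : ∑ i ∈ s, Φ (φ i)
      = (m : ℂ)⁻¹ * ∑ h, 𝓕 Φ h * ∑ i ∈ s, stdAddChar (h * φ i) := by
    conv_lhs => rw [← LinearEquiv.symm_apply_apply dft Φ]
    simp only [invDFT_apply, smul_eq_mul, ← mul_sum, mul_comm (stdAddChar _)]
    rw [sum_comm]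
    simp only [mul_sum]
  calc ‖∑ i ∈ s, Φ (φ i)‖
      ≤ (m : ℝ)⁻¹ * ∑ h, ‖𝓕 Φ h‖ * ‖∑ i ∈ s, stdAddChar (h * φ i)‖ := by
        rw [inversion, norm_mul, norm_inv, Complex.norm_natCast]
        gcongr
        exact (norm_sum_le _ _).trans_eq (by simp only [norm_mul])
    _ ≤ (m : ℝ)⁻¹ * ∑ h, B * ‖∑ i ∈ s, stdAddChar (h * φ i)‖ := by
        gcongr with h
        exact hB h
    _ = B / m * ∑ h, ‖∑ i ∈ s, stdAddChar (h * φ i)‖ := by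
        rw [← mul_sum]
        ring

theorem norm_stdAddChar_natCast_sub_one (k : ℕ) :
    ‖stdAddChar (k : ZMod m) - 1‖ = 2 * |sin (π * k / m)| := by
  rw [stdAddChar_apply, toCircle_natCast,
    show 2 * π * Complex.I * k / m = Complex.I * ((2 * π * k / m : ℝ) : ℂ) by push_cast; ring,
    Complex.norm_exp_I_mul_ofReal_sub_one, norm_mul, Real.norm_two, Real.norm_eq_abs]
  congr 3
  ring

theorem norm_sum_Icc_stdAddChar_mul_le (c : ℤ) (N : ℕ) {k : ℕ} (hk0 : 0 < k) (hkm : k < m) :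
    ‖∑ n ∈ Icc (c + 1) (c + N), stdAddChar ((k : ZMod m) * (n : ZMod m))‖
      ≤ 1 / sin (π * k / m) := by
  have hsin : 0 < sin (π * k / m) := by
    have hk : (0 : ℝ) < k := Nat.cast_pos.mpr hk0
    have hkm : (k : ℝ) < m := Nat.cast_lt.mpr hkm
    apply sin_pos_of_pos_of_lt_pi (div_pos (by positivity) (hk.trans hkm))
    rw [div_lt_iff₀ (hk.trans hkm)]
    exact mul_lt_mul_of_pos_left hkm pi_pos
  have hψk : stdAddChar (k : ZMod m) ≠ 1 := by
    intro h
    have := norm_stdAddChar_natCast_sub_one (m := m) k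
    rw [h, sub_self, norm_zero, abs_of_pos hsin] at this
    linarith
  have factor : ∑ n ∈ Icc (c + 1) (c + N), stdAddChar ((k : ZMod m) * (n : ZMod m))
      = stdAddChar ((k : ZMod m) * ((c + 1 : ℤ) : ZMod m))
          * ∑ j ∈ range N, stdAddChar (k : ZMod m) ^ j := by
    rw [sum_Icc_add_one_eq_sum_range, mul_sum]
    refine sum_congr rfl fun j _ ↦ ?_
    rw [← AddChar.map_nsmul_eq_pow, ← AddChar.map_add_eq_mul, nsmul_eq_mul]
    congr 1
    push_cast
    ring
  calc _ = ‖∑ j ∈ range N, stdAddChar (k : ZMod m) ^ j‖ := by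
        rw [factor, norm_mul, AddChar.norm_apply, one_mul]
    _ ≤ 2 / ‖stdAddChar (k : ZMod m) - 1‖ :=
        norm_geom_sum_le_of_norm_eq_one (AddChar.norm_apply _ _) hψk N
    _ = 1 / sin (π * k / m) := by
        rw [norm_stdAddChar_natCast_sub_one, abs_of_pos hsin]
        field_simp

theorem sum_norm_sum_Icc_stdAddChar_mul_le (c : ℤ) (N : ℕ) :
    ∑ h : ZMod m, ‖∑ n ∈ Icc (c + 1) (c + N), stdAddChar (h * (n : ZMod m))‖
      ≤ N + 2 * m / π * (1 + log m) := by
  rw [sum_eq_sum_range, range_eq_Ico, sum_eq_sum_Ico_succ_bot (NeZero.pos m)]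
  gcongr
  · simp
  · refine (sum_le_sum fun k hk ↦ ?_).trans (sum_Ico_one_div_sin_pi_div_le m)
    obtain ⟨hk1, hkm⟩ := mem_Ico.mp hk
    exact norm_sum_Icc_stdAddChar_mul_le c N hk1 hkm

end ZMod

theorem e_intCast_div_eq_stdAddChar (m : ℕ) [NeZero m] (k : ℤ) :
    e ((k : ℝ) / m) = stdAddChar (k : ZMod m) := by
  rw [stdAddChar_coe, e]
  push_cast
  ring_nf

/-- Incomplete quadratic Gauss sum bound. -/
theorem stmt10 (a b n0 : ℤ) (m N : ℕ) (hm : 1 ≤ m) :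
    ‖(∑ n ∈ Finset.Icc (n0 + 1) (n0 + N),
        e (((a * n ^ 2 + b * n : ℤ) : ℝ) / m))‖ ≤
      ((N : ℝ) / m + 1 + 2 / Real.pi * Real.log (2 * m / Real.pi)) *
        Real.sqrt (2 * m * Int.gcd a m) := by
  have : NeZero m := ⟨by omega⟩
  set Φ : ZMod m → ℂ := fun x ↦ stdAddChar ((a : ZMod m) * x ^ 2 + (b : ZMod m) * x)
  have hsum : ∑ n ∈ Icc (n0 + 1) (n0 + N), e (((a * n ^ 2 + b * n : ℤ) : ℝ) / m)
      = ∑ n ∈ Icc (n0 + 1) (n0 + N), Φ n := by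
    refine sum_congr rfl fun n _ ↦ ?_
    rw [e_intCast_div_eq_stdAddChar]
    push_cast
    rfl
  have hdft (k : ZMod m) : ‖𝓕 Φ k‖ ≤ √(2 * m * Int.gcd a m) := by
    rw [dft_stdAddChar_quadratic]
    exact norm_sum_stdAddChar_quadratic_le a _
  have hm0 : (0 : ℝ) < m := by exact_mod_cast hm
  calc _ ≤ √(2 * m * Int.gcd a m) / m * (N + 2 * m / π * (1 + log m)) := by
        rw [hsum]
        exact (norm_sum_le_of_norm_dft_le _ _ Φ hdft).trans <| mul_le_mul_of_nonneg_left
          (sum_norm_sum_Icc_stdAddChar_mul_le n0 N) (by positivity)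
    _ = (N / m + 2 / π * (1 + log m)) * √(2 * m * Int.gcd a m) := by
        field_simp
    _ ≤ _ := mul_le_mul_of_nonneg_right
        (by linarith [two_div_pi_mul_one_add_log_le hm0]) (sqrt_nonneg _)
end

section
/- For all complex numbers z_1,...,z_N and all integers Q ≥ 1, R ≥ 1: |Σ_{n=1}^{N} z_n|² ≤ ((N + QR - Q)/R)·(Σ_{n=1}^{N} |z_n|² + 2·Σ_{r=1}^{R-1} (1 - r/R)·Σ_{n=1}^{N-Qr} Re(z_{n+Qr}·conj(z_n))). -/
/-!
Extend `z` by zero to `w : ℤ → ℂ` and put `g m = ∑_{r < R} w (m + Q r)`. On the window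
`A = [1 - Q (R - 1), N]`, of length `N + Q R - Q`, each shift `m ↦ m + Q r` covers the whole
support of `w`, so `∑_{m ∈ A} g m = R ∑ z`. Cauchy–Schwarz gives `R² |∑ z|² ≤ |A| ∑_{m ∈ A} |g m|²`.
Expanding `|g m|²`, the pair `(r, s)` contributes the correlation of `z` at lag `Q |r - s|`, and the
lag `Q d` occurs `R` times for `d = 0` and `2 (R - d)` times for `0 < d < R`.
-/

open Finset ComplexConjugate

section

variable {M : Type*} [AddCommMonoid M]

theorem Int.sum_Icc_natCast (f : ℤ → M) (a b : ℕ) :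
    ∑ k ∈ Icc (a : ℤ) b, f k = ∑ n ∈ Icc a b, f n := by
  refine (sum_nbij' (↑) Int.toNat ?_ ?_ ?_ ?_ ?_).symm <;> intros <;> simp_all <;> omega

theorem sum_Icc_add_eq_of_support_subset {w : ℤ → M} {a b : ℤ}
    (hw : ∀ k ∉ Icc a b, w k = 0) {lo hi c : ℤ} (hlo : lo + c ≤ a) (hhi : b ≤ hi + c) :
    ∑ m ∈ Icc lo hi, w (m + c) = ∑ k ∈ Icc a b, w k := by
  have hshift : ∑ m ∈ Icc lo hi, w (m + c) = ∑ k ∈ Icc (lo + c) (hi + c), w k := by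
    rw [← map_add_right_Icc, sum_map]
    rfl
  rw [hshift]
  refine (sum_subset (fun k hk => ?_) fun k _ hk => hw k hk).symm
  simp only [mem_Icc] at hk ⊢
  omega

theorem sum_range_sum_range_dist (t : ℕ → M) (R : ℕ) :
    ∑ r ∈ range R, ∑ s ∈ range R, t (Nat.dist r s) =
      R • t 0 + 2 • ∑ d ∈ Ico 1 R, (R - d) • t d := by
  induction R with
  | zero => simp
  | succ R ih =>
    have hrow : ∑ s ∈ range R, t (Nat.dist R s) = ∑ d ∈ Ico 1 (R + 1), t d := by
      refine sum_nbij' (R - ·) (R - ·) ?_ ?_ ?_ ?_ fun s hs => ?_ <;>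
        try (intro s hs; simp_all; omega)
      rw [Nat.dist_eq_sub_of_le_right (mem_range.1 hs).le]
    have hweights : ∑ d ∈ Ico 1 (R + 1), (R + 1 - d) • t d =
        ∑ d ∈ Ico 1 R, (R - d) • t d + ∑ d ∈ Ico 1 (R + 1), t d := by
      have htop : ∑ d ∈ Ico 1 R, (R - d) • t d = ∑ d ∈ Ico 1 (R + 1), (R - d) • t d :=
        sum_subset (Ico_subset_Ico_right R.le_succ) fun d hd hd' => by
          simp only [mem_Ico] at hd hd'
          rw [show R - d = 0 by omega, zero_smul]
      rw [htop, ← sum_add_distrib]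
      refine sum_congr rfl fun d hd => ?_
      rw [← succ_nsmul, mem_Ico.1 hd |>.2 |> Nat.lt_succ_iff.1 |> Nat.succ_sub]
    simp only [sum_range_succ, sum_add_distrib, Nat.dist_self, Nat.dist_comm _ R, hrow, ih,
      hweights, succ_nsmul]
    abel

end

theorem sq_norm_sum_le_card_mul_sum_sq_norm {ι E : Type*} [SeminormedAddCommGroup E]
    (s : Finset ι) (f : ι → E) : ‖∑ i ∈ s, f i‖ ^ 2 ≤ #s * ∑ i ∈ s, ‖f i‖ ^ 2 :=
  (pow_le_pow_left₀ (norm_nonneg _) (norm_sum_le s f) 2).trans sq_sum_le_card_mul_sum_sq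

theorem Complex.sq_norm_sum {ι : Type*} (s : Finset ι) (x : ι → ℂ) :
    ‖∑ i ∈ s, x i‖ ^ 2 = ∑ i ∈ s, ∑ j ∈ s, (x i * conj (x j)).re := by
  rw [← Complex.ofReal_re (‖_‖ ^ 2), Complex.ofReal_pow, ← Complex.mul_conj', map_sum, sum_mul_sum,
    Complex.re_sum]
  simp_rw [Complex.re_sum]

theorem Complex.re_mul_conj_comm (x y : ℂ) : (x * conj y).re = (y * conj x).re := by
  rw [← Complex.conj_re, map_mul, Complex.conj_conj, mul_comm]

namespace VanDerCorput

noncomputable def correlation (w : ℤ → ℂ) (a b h : ℤ) : ℝ :=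
  ∑ k ∈ Icc a b, (w (k + h) * conj (w k)).re

variable {w : ℤ → ℂ} {a b : ℤ}

theorem sum_mul_conj_shift_eq_correlation (hw : ∀ k ∉ Icc a b, w k = 0) {Q L r s : ℕ}
    (hr : Q * r ≤ L) (hs : Q * s ≤ L) :
    ∑ m ∈ Icc (a - L) b, (w (m + ↑(Q * r)) * conj (w (m + ↑(Q * s)))).re =
      correlation w a b ↑(Q * Nat.dist r s) := by
  wlog hsr : s ≤ r generalizing r s
  · rw [sum_congr rfl fun m _ => Complex.re_mul_conj_comm _ _, Nat.dist_comm]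
    exact this hs hr (le_of_not_ge hsr)
  have hlag (m : ℤ) : m + ↑(Q * r) = m + ↑(Q * s) + ↑(Q * Nat.dist r s) := by
    rw [Nat.dist_eq_sub_of_le_right hsr]
    push_cast [Nat.mul_sub, Nat.mul_le_mul_left Q hsr]
    ring
  simp_rw [hlag]
  refine sum_Icc_add_eq_of_support_subset (w := fun k => (w (k + _) * conj (w k)).re)
    (fun k hk => by simp [hw k hk]) (by omega) (by omega)

theorem sq_mul_sq_norm_sum_le (hw : ∀ k ∉ Icc a b, w k = 0) (Q R : ℕ) :
    (R : ℝ) ^ 2 * ‖∑ k ∈ Icc a b, w k‖ ^ 2 ≤ #(Icc (a - ↑(Q * (R - 1))) b) *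
      ∑ r ∈ range R, ∑ s ∈ range R, correlation w a b ↑(Q * Nat.dist r s) := by
  set A := Icc (a - ↑(Q * (R - 1))) b
  set g : ℤ → ℂ := fun m => ∑ r ∈ range R, w (m + ↑(Q * r))
  have hQr {r : ℕ} (hr : r ∈ range R) : Q * r ≤ Q * (R - 1) :=
    Nat.mul_le_mul_left Q (Nat.le_sub_one_of_lt (mem_range.1 hr))
  have hsum : ∑ m ∈ A, g m = R • ∑ k ∈ Icc a b, w k := by
    rw [sum_comm, sum_congr rfl fun r hr => sum_Icc_add_eq_of_support_subset hw
      (by have := hQr hr; omega) (by omega), sum_const, card_range]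
  have hsq : ∑ m ∈ A, ‖g m‖ ^ 2 =
      ∑ r ∈ range R, ∑ s ∈ range R, correlation w a b ↑(Q * Nat.dist r s) := by
    simp_rw [g, Complex.sq_norm_sum]
    rw [sum_comm]
    refine sum_congr rfl fun r hr => ?_
    rw [sum_comm]
    exact sum_congr rfl fun s hs => sum_mul_conj_shift_eq_correlation hw (hQr hr) (hQr hs)
  calc (R : ℝ) ^ 2 * ‖∑ k ∈ Icc a b, w k‖ ^ 2 = ‖∑ m ∈ A, g m‖ ^ 2 := by
        rw [hsum, nsmul_eq_mul, norm_mul, mul_pow, Complex.norm_natCast]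
    _ ≤ #A * ∑ m ∈ A, ‖g m‖ ^ 2 := sq_norm_sum_le_card_mul_sum_sq_norm A g
    _ = _ := by rw [hsq]

theorem sq_norm_sum_le (hw : ∀ k ∉ Icc a b, w k = 0) (Q : ℕ) {R : ℕ} (hR : 0 < R) :
    ‖∑ k ∈ Icc a b, w k‖ ^ 2 ≤ (#(Icc (a - ↑(Q * (R - 1))) b) / R : ℝ) *
      (correlation w a b 0 +
        2 * ∑ d ∈ Ico 1 R, (1 - (d : ℝ) / R) * correlation w a b ↑(Q * d)) := by
  set c : ℕ → ℝ := fun d => correlation w a b ↑(Q * d)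
  have hcount : ∑ r ∈ range R, ∑ s ∈ range R, c (Nat.dist r s) =
      R * c 0 + 2 * ∑ d ∈ Ico 1 R, (R - d : ℝ) * c d := by
    rw [sum_range_sum_range_dist c, nsmul_eq_mul, nsmul_eq_mul, Nat.cast_ofNat]
    congr 2
    exact sum_congr rfl fun d hd => by rw [nsmul_eq_mul, Nat.cast_sub (mem_Ico.1 hd).2.le]
  have hweights : ∑ d ∈ Ico 1 R, (1 - (d : ℝ) / R) * c d =
      (∑ d ∈ Ico 1 R, (R - d : ℝ) * c d) / R := by
    rw [sum_div]
    exact sum_congr rfl fun d _ => by field_simp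
  have hR' : (0 : ℝ) < R := by exact_mod_cast hR
  rw [show correlation w a b 0 = c 0 by simp [c], hweights]
  calc ‖∑ k ∈ Icc a b, w k‖ ^ 2 = (R : ℝ) ^ 2 * ‖∑ k ∈ Icc a b, w k‖ ^ 2 / R ^ 2 := by
        field_simp
    _ ≤ #(Icc (a - ↑(Q * (R - 1))) b) * (R * c 0 + 2 * ∑ d ∈ Ico 1 R, (R - d : ℝ) * c d) /
          R ^ 2 := by
        rw [← hcount]
        exact div_le_div_of_nonneg_right (sq_mul_sq_norm_sum_le hw Q R) (by positivity)
    _ = _ := by field_simp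

noncomputable def zeroExtend {M : Type*} [Zero M] (z : ℕ → M) (N : ℕ) (k : ℤ) : M :=
  if k ∈ Icc 1 (N : ℤ) then z k.toNat else 0

section zeroExtend

variable {M : Type*} (z : ℕ → M) (N : ℕ)

theorem zeroExtend_of_notMem [Zero M] {k : ℤ} (hk : k ∉ Icc 1 (N : ℤ)) : zeroExtend z N k = 0 :=
  if_neg hk

theorem zeroExtend_natCast [Zero M] {n : ℕ} (hn : n ∈ Icc 1 N) : zeroExtend z N n = z n := by
  simp only [mem_Icc] at hn
  simp [zeroExtend, hn.1, hn.2]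

theorem sum_zeroExtend [AddCommMonoid M] :
    ∑ k ∈ Icc 1 (N : ℤ), zeroExtend z N k = ∑ n ∈ Icc 1 N, z n := by
  rw [← Nat.cast_one, Int.sum_Icc_natCast]
  exact sum_congr rfl fun n hn => zeroExtend_natCast z N hn

end zeroExtend

theorem correlation_zeroExtend (z : ℕ → ℂ) (N h : ℕ) :
    correlation (zeroExtend z N) 1 N h = ∑ n ∈ Icc 1 (N - h), (z (n + h) * conj (z n)).re := by
  rw [correlation, ← Nat.cast_one, Int.sum_Icc_natCast]
  refine (sum_subset (Icc_subset_Icc_right (Nat.sub_le N h)) fun n hn hn' => ?_).symm.trans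
    (sum_congr rfl fun n hn => ?_)
  · simp only [mem_Icc] at hn hn'
    rw [← Nat.cast_add, zeroExtend_of_notMem z N (by simp; omega), zero_mul, Complex.zero_re]
  · simp only [mem_Icc] at hn
    rw [← Nat.cast_add, zeroExtend_natCast z N (by simp; omega),
      zeroExtend_natCast z N (by simp; omega)]

end VanDerCorput

open VanDerCorput

theorem stmt11_general (N : ℕ) (z : ℕ → ℂ) (Q R : ℕ) (hR : 1 ≤ R) :
    ‖∑ n ∈ Finset.Icc 1 N, z n‖ ^ 2 ≤
      ((N + Q * R - Q : ℝ) / R) *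
        (∑ n ∈ Finset.Icc 1 N, ‖z n‖ ^ 2 +
          2 * ∑ r ∈ Finset.Ico 1 R, (1 - (r : ℝ) / R) *
            ∑ n ∈ Finset.Icc 1 (N - Q * r), (z (n + Q * r) * (starRingEnd ℂ) (z n)).re) := by
  have hcard : (#(Icc (1 - ↑(Q * (R - 1)) : ℤ) N) : ℝ) = N + Q * R - Q := by
    have hlen : (N + 1 - (1 - ↑(Q * (R - 1))) : ℤ) = ↑(N + Q * (R - 1)) := by push_cast; ring
    rw [Int.card_Icc, hlen, Int.toNat_natCast, Nat.cast_add, Nat.cast_mul, Nat.cast_sub hR]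
    ring
  have hnorm : correlation (zeroExtend z N) 1 N 0 = ∑ n ∈ Icc 1 N, ‖z n‖ ^ 2 := by
    simpa [Complex.mul_conj', ← Complex.ofReal_pow] using correlation_zeroExtend z N 0
  have := sq_norm_sum_le (fun k => zeroExtend_of_notMem z N) Q hR
  rw [sum_zeroExtend, hcard, hnorm] at this
  simpa only [correlation_zeroExtend] using this

/-- Generalized van der Corput inequality. -/
theorem stmt11 (N : ℕ) (z : ℕ → ℂ) (Q R : ℕ) (hQ : 1 ≤ Q) (hR : 1 ≤ R) :
    ‖∑ n ∈ Finset.Icc 1 N, z n‖ ^ 2 ≤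
      ((N + Q * R - Q : ℝ) / R) *
        (∑ n ∈ Finset.Icc 1 N, ‖z n‖ ^ 2 +
          2 * ∑ r ∈ Finset.Ico 1 R, (1 - (r : ℝ) / R) *
            ∑ n ∈ Finset.Icc 1 (N - Q * r), (z (n + Q * r) * (starRingEnd ℂ) (z n)).re) :=
  stmt11_general N z Q R hR
end

section
/- Let m ≥ 1 and A ≥ 1 be integers, b ∈ ℝ, and U > 0 a real number. Then (1/A)·Σ_{a=1}^{A} Σ_{n=0}^{m-1} min(U, |sin(π(an+b)/m)|^{-1}) ≪ τ(m)·U + m·log m, where τ(m) is the number of divisors of m and the implied constant is absolute. -/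
/-!
Fix `a`, let `d = gcd a m` and write `a = a' d`, `m = m' d`. As `x ↦ sinBound U (π x)` has
period `1` and `a'` is invertible mod `m'`, the `m` points `(a n + b) / m` run `d` times through
a shifted grid `(k + β) / m'`, `k < m'`, with `0 ≤ β < 1`. By Jordan's inequality
`sin (π x) ≥ 2 min x (1 - x)` on `[0, 1]`, the `k`-th grid point contributes at most
`m' / (2 k) + m' / (2 (m' - 1 - k))`, and each of the two end points at most `U`; summing gives
`2 U + m' H (m' - 1) ≤ 2 U + 2 m' log m'`. Hence the inner sum is at most
`2 gcd(a, m) U + 2 m log m`, and `∑_{a ≤ A} gcd(a, m) ≤ A τ(m)` finishes.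
-/

/-- `min U |sin x|⁻¹`, where terms with vanishing sine take the value `U`. -/
noncomputable def sinBound (U x : ℝ) : ℝ :=
  if Real.sin x = 0 then U else min U |Real.sin x|⁻¹

open Finset Real Function

theorem sinBound_le (U x : ℝ) : sinBound U x ≤ U := by
  unfold sinBound
  split_ifs
  · exact le_rfl
  · exact min_le_left _ _

theorem sinBound_le_inv_abs_sin {U x : ℝ} (hx : sin x ≠ 0) : sinBound U x ≤ |sin x|⁻¹ := by
  rw [sinBound, if_neg hx]
  exact min_le_right _ _

theorem sinBound_add_pi (U x : ℝ) : sinBound U (x + π) = sinBound U x := by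
  simp [sinBound, sin_add_pi]

theorem periodic_sinBound_pi_mul (U : ℝ) : Periodic (fun x => sinBound U (π * x)) 1 :=
  fun x => by
  simp only [mul_add, mul_one, sinBound_add_pi]

theorem two_mul_le_sin_pi_mul {x : ℝ} (h0 : 0 ≤ x) (h1 : x ≤ 1 / 2) :
    2 * x ≤ sin (π * x) := by
  have h := mul_le_sin (x := π * x) (by positivity) (by nlinarith [pi_pos])
  rwa [← mul_assoc, div_mul_cancel₀ _ pi_ne_zero] at h

theorem sinBound_pi_mul_le {U x : ℝ} (h0 : 0 < x) (h1 : x < 1) :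
    sinBound U (π * x) ≤ (2 * x)⁻¹ + (2 * (1 - x))⁻¹ := by
  have hsin : 0 < sin (π * x) := sin_pos_of_pos_of_lt_pi (by positivity) (by nlinarith [pi_pos])
  refine (sinBound_le_inv_abs_sin hsin.ne').trans ?_
  rw [abs_of_pos hsin]
  rcases le_total x (1 / 2) with hx | hx
  · have := inv_anti₀ (by positivity) (two_mul_le_sin_pi_mul h0.le hx)
    linarith [inv_pos.2 (by linarith : 0 < 2 * (1 - x))]
  · have h := two_mul_le_sin_pi_mul (x := 1 - x) (by linarith) (by linarith)
    rw [show π * (1 - x) = π - π * x by ring, sin_pi_sub] at h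
    have := inv_anti₀ (by linarith) h
    linarith [inv_pos.2 (by linarith : 0 < 2 * x)]

theorem harmonic_le_two_mul_log_succ (n : ℕ) : (harmonic n : ℝ) ≤ 2 * log (n + 1) := by
  rcases Nat.eq_zero_or_pos n with rfl | hn
  · simp
  have hn' : (1 : ℝ) ≤ n := by exact_mod_cast hn
  have h4n : log 4 + log n ≤ 2 * log (n + 1) := by
    rw [← log_mul (by norm_num) (by positivity), show 2 * log (n + 1 : ℝ) = log ((n + 1) ^ 2) by
      rw [log_pow]; norm_num]
    exact log_le_log (by positivity) (by nlinarith)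
  have h4 : 1 < log 4 := by
    rw [show (4 : ℝ) = 2 * 2 by norm_num, log_mul two_ne_zero two_ne_zero]
    linarith [log_two_gt_d9]
  linarith [harmonic_le_one_add_log n]

noncomputable def gridWeight (U : ℝ) (M k : ℕ) : ℝ := if k = 0 then U else M / (2 * k)

theorem gridWeight_zero (U : ℝ) (M : ℕ) : gridWeight U M 0 = U := if_pos rfl

theorem gridWeight_nonneg {U : ℝ} (hU : 0 ≤ U) (M k : ℕ) : 0 ≤ gridWeight U M k := by
  unfold gridWeight
  split_ifs <;> positivity

theorem sum_range_gridWeight_le {U : ℝ} (hU : 0 ≤ U) (M : ℕ) :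
    ∑ k ∈ range M, gridWeight U M k ≤ U + M * log M := by
  rcases M with _ | n
  · simpa using hU
  have hsum : ∑ k ∈ range n, gridWeight U (n + 1) (k + 1) = (n + 1) / 2 * harmonic n := by
    simp only [gridWeight, Nat.add_one_ne_zero, if_false, harmonic, Rat.cast_sum, mul_sum]
    push_cast
    exact sum_congr rfl fun k _ => by field_simp
  rw [sum_range_succ', hsum, gridWeight_zero]
  push_cast
  nlinarith [harmonic_le_two_mul_log_succ n]

theorem sinBound_grid_le {U β : ℝ} (hU : 0 ≤ U) (hβ0 : 0 ≤ β) (hβ1 : β < 1) {M k : ℕ}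
    (hk : k < M) :
    sinBound U (π * ((k + β) / M)) ≤ gridWeight U M k + gridWeight U M (M - 1 - k) := by
  rcases Nat.eq_zero_or_pos k with rfl | hk0
  · rw [gridWeight_zero]
    linarith [sinBound_le U (π * ((0 + β) / M)), gridWeight_nonneg hU M (M - 1 - 0)]
  rcases Nat.eq_zero_or_pos (M - 1 - k) with hk1 | hk1
  · rw [hk1, gridWeight_zero]
    linarith [sinBound_le U (π * ((k + β) / M)), gridWeight_nonneg hU M k]
  have hM : (0 : ℝ) < M := by exact_mod_cast hk0.trans hk
  have hk0' : (0 : ℝ) < k := by exact_mod_cast hk0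
  have hk1' : (0 : ℝ) < (M - 1 - k : ℕ) := by exact_mod_cast hk1
  have hMk : ((M - 1 - k : ℕ) : ℝ) = M - 1 - k := by
    rw [Nat.cast_sub (by omega), Nat.cast_sub (by omega), Nat.cast_one]
  have hleft : (k : ℝ) / M ≤ (k + β) / M := by gcongr; linarith
  have hright : ((M - 1 - k : ℕ) : ℝ) / M ≤ 1 - (k + β) / M := by
    rw [hMk, one_sub_div hM.ne']
    exact div_le_div_of_nonneg_right (by linarith) hM.le
  have hx0 : 0 < (k + β) / M := by positivity
  have hx1 : (k + β) / M < 1 := by linarith [(div_pos hk1' hM).trans_le hright]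
  refine (sinBound_pi_mul_le hx0 hx1).trans (add_le_add ?_ ?_)
  · rw [gridWeight, if_neg hk0.ne',
      show (M : ℝ) / (2 * k) = (2 * ((k : ℝ) / M))⁻¹ by field_simp]
    exact inv_anti₀ (by positivity) (by linarith)
  · rw [gridWeight, if_neg hk1.ne',
      show (M : ℝ) / (2 * (M - 1 - k : ℕ)) = (2 * (((M - 1 - k : ℕ) : ℝ) / M))⁻¹ by
        field_simp]
    exact inv_anti₀ (by positivity) (by linarith)

theorem sum_sinBound_grid_le {U β : ℝ} (hU : 0 ≤ U) (hβ0 : 0 ≤ β) (hβ1 : β < 1)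
    (M : ℕ) :
    ∑ k ∈ range M, sinBound U (π * ((k + β) / M)) ≤ 2 * U + 2 * M * log M := by
  calc _ ≤ ∑ k ∈ range M, (gridWeight U M k + gridWeight U M (M - 1 - k)) :=
        sum_le_sum fun k hk => sinBound_grid_le hU hβ0 hβ1 (mem_range.1 hk)
    _ = 2 * ∑ k ∈ range M, gridWeight U M k := by rw [sum_add_distrib, sum_range_reflect]; ring
    _ ≤ 2 * (U + M * log M) := by gcongr; exact sum_range_gridWeight_le hU M
    _ = 2 * U + 2 * M * log M := by ring

theorem ZMod.sum_range_natCast {M : Type*} [AddCommMonoid M] {p : ℕ} [NeZero p]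
    (F : ZMod p → M) :
    ∑ k ∈ range p, F k = ∑ x, F x := by
  obtain ⟨n, rfl⟩ : ∃ n, p = n + 1 := Nat.exists_eq_succ_of_ne_zero (NeZero.ne p)
  rw [← Fin.sum_univ_eq_sum_range]
  exact sum_congr rfl fun i _ => congrArg F (Fin.cast_val_eq_self i)

theorem periodic_sinBound_grid (U β : ℝ) {p : ℕ} (hp : 0 < p) :
    Periodic (fun k : ℕ => sinBound U (π * ((k + β) / p))) p := fun k => by
  show sinBound U (π * ((↑(k + p) + β) / p)) = sinBound U (π * ((k + β) / p))
  rw [Nat.cast_add, add_right_comm, add_div, div_self (by positivity)]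
  exact periodic_sinBound_pi_mul U _

theorem sinBound_pi_mul_add_intCast_div (U x : ℝ) {p : ℕ} (hp : 0 < p) (t : ℤ) :
    sinBound U (π * ((x + t) / p)) = sinBound U (π * ((x + (t % p).toNat) / p)) := by
  have ht : ((t % p).toNat : ℝ) + p * (t / p : ℤ) = t := by
    have := Int.emod_add_mul_ediv t p
    rw [← Int.toNat_of_nonneg (Int.emod_nonneg _ (by exact_mod_cast hp.ne'))] at this
    exact_mod_cast this
  rw [← ht, ← add_assoc, add_div, mul_div_cancel_left₀ _ (by positivity),
    ← mul_one ((t / p : ℤ) : ℝ)]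
  exact (periodic_sinBound_pi_mul U).int_mul _ _

namespace Function.Periodic

variable {M : Type*} [AddCommMonoid M] {g : ℕ → M} {p : ℕ}

theorem sum_range_mul (hg : Periodic g p) (d : ℕ) :
    ∑ n ∈ range (d * p), g n = d • ∑ n ∈ range p, g n := by
  induction d with
  | zero => simp
  | succ d ih =>
    rw [add_mul, one_mul, sum_range_add, ih, succ_nsmul]
    congr 1
    exact sum_congr rfl fun n _ => by rw [add_comm]; exact hg.nat_mul d n

theorem sum_range_comp_mul_add (hg : Periodic g p) {a : ℕ} (ha : a.Coprime p) (q : ℕ) :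
    ∑ k ∈ range p, g (a * k + q) = ∑ k ∈ range p, g k := by
  rcases p.eq_zero_or_pos with rfl | hp
  · simp
  have : NeZero p := ⟨hp.ne'⟩
  have hg' : ∀ n : ℕ, g n = g (n : ZMod p).val := fun n => by
    rw [ZMod.val_natCast, hg.map_mod_nat]
  have hbij : Bijective fun x : ZMod p => (a : ZMod p) * x + q :=
    (add_left_injective _).bijective_of_finite |>.comp
      (IsUnit.isUnit_iff_mulLeft_bijective.1 ((ZMod.isUnit_iff_coprime a p).2 ha))
  calc ∑ k ∈ range p, g (a * k + q)
      = ∑ k ∈ range p, g ((a : ZMod p) * k + q).val :=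
        sum_congr rfl fun k _ => by rw [hg']; push_cast; rfl
    _ = ∑ x, g ((a : ZMod p) * x + q).val :=
        ZMod.sum_range_natCast fun x => g ((a : ZMod p) * x + (q : ZMod p)).val
    _ = ∑ x : ZMod p, g x.val := Fintype.sum_bijective _ hbij _ _ fun _ => rfl
    _ = ∑ k ∈ range p, g k := by
        rw [← ZMod.sum_range_natCast]
        exact sum_congr rfl fun k _ => (hg' k).symm

end Function.Periodic

theorem sum_sinBound_eq_nsmul_grid (U b : ℝ) {a' m' d : ℕ} (hcop : a'.Coprime m') (hm' : 0 < m')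
    (hd : 0 < d) :
    ∑ n ∈ range (m' * d), sinBound U (π * ((↑(a' * d) * n + b) / ↑(m' * d))) =
      d • ∑ k ∈ range m', sinBound U (π * ((k + Int.fract (b / d)) / m')) := by
  set g := fun k : ℕ => sinBound U (π * ((k + Int.fract (b / d)) / m'))
  have hg : Periodic g m' := periodic_sinBound_grid U _ hm'
  set q := (⌊b / d⌋ % (m' : ℤ)).toNat
  have hterm (n : ℕ) :
      sinBound U (π * ((↑(a' * d) * n + b) / ↑(m' * d))) = g (a' * n + q) := by
    have hx : (↑(a' * d) * n + b) / ↑(m' * d) =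
        (a' * n + Int.fract (b / d) + ⌊b / d⌋) / m' := by
      rw [add_assoc, Int.fract_add_floor]
      push_cast
      field_simp
    rw [hx, sinBound_pi_mul_add_intCast_div U _ hm']
    simp only [g, q]
    push_cast
    ring_nf
  have hcomp : Periodic (fun n => g (a' * n + q)) m' := fun n => by
    show g (a' * (n + m') + q) = g (a' * n + q)
    rw [mul_add, add_right_comm]
    exact hg.nat_mul a' _
  rw [sum_congr rfl fun n _ => hterm n, mul_comm, hcomp.sum_range_mul,
    hg.sum_range_comp_mul_add hcop]

theorem sum_sinBound_mul_add_div_le {U : ℝ} (hU : 0 ≤ U) (a : ℕ) {m : ℕ} (hm : 0 < m)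
    (b : ℝ) :
    ∑ n ∈ range m, sinBound U (π * ((a * n + b) / m)) ≤ 2 * a.gcd m * U + 2 * m * log m := by
  obtain ⟨a', m', hcop, ha, hm'⟩ := Nat.exists_coprime a m
  have hm'0 : 0 < m' := Nat.pos_of_mul_pos_right (hm' ▸ hm)
  have hd : 0 < a.gcd m := Nat.gcd_pos_of_pos_right a hm
  generalize a.gcd m = d at ha hm' hd ⊢
  subst ha hm'
  rw [sum_sinBound_eq_nsmul_grid U b hcop hm'0 hd, nsmul_eq_mul]
  have hlog : log m' ≤ log ↑(m' * d) :=
    log_le_log (by positivity) (by exact_mod_cast Nat.le_mul_of_pos_right m' hd)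
  calc (d : ℝ) * ∑ k ∈ range m', sinBound U (π * ((k + Int.fract (b / d)) / m'))
      ≤ d * (2 * U + 2 * m' * log m') := by
        gcongr
        exact sum_sinBound_grid_le hU (Int.fract_nonneg _) (Int.fract_lt_one _) m'
    _ = 2 * d * U + 2 * ↑(m' * d) * log m' := by push_cast; ring
    _ ≤ 2 * d * U + 2 * ↑(m' * d) * log ↑(m' * d) := by gcongr

theorem sum_Icc_gcd_le (A : ℕ) {m : ℕ} (hm : m ≠ 0) :
    ∑ a ∈ Icc 1 A, a.gcd m ≤ A * #m.divisors := by
  rw [← sum_fiberwise_of_maps_to (t := m.divisors) (g := fun a => a.gcd m)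
    fun a _ => Nat.mem_divisors.2 ⟨Nat.gcd_dvd_right a m, hm⟩, mul_comm, ← smul_eq_mul,
    ← sum_const]
  refine sum_le_sum fun e _ => ?_
  calc ∑ a ∈ Icc 1 A with a.gcd m = e, a.gcd m = #{a ∈ Icc 1 A | a.gcd m = e} * e :=
        sum_const_nat fun a ha => (mem_filter.1 ha).2
    _ ≤ #{a ∈ Ioc 0 A | e ∣ a} * e := by
        gcongr
        exact monotone_filter_right _ fun a _ (h : a.gcd m = e) => h ▸ Nat.gcd_dvd_left a m
    _ = A / e * e := by rw [Nat.Ioc_filter_dvd_card_eq_div]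
    _ ≤ A := Nat.div_mul_le_self A e

/-- Averaged double sum bound with divisor function; the implied constant is absolute. -/
theorem stmt13 :
    ∃ C : ℝ, 0 < C ∧ ∀ m A : ℕ, 1 ≤ m → 1 ≤ A → ∀ b U : ℝ, 0 < U →
      (1 / (A : ℝ)) * ∑ a ∈ Finset.Icc 1 A, ∑ n ∈ Finset.range m,
          sinBound U (Real.pi * ((a * n + b) / m)) ≤
        C * ((m.divisors.card : ℝ) * U + m * Real.log m) := by
  refine ⟨2, two_pos, fun m A hm hA b U hU => ?_⟩
  have hA' : (0 : ℝ) < A := by exact_mod_cast hA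
  have hgcd : ∑ a ∈ Icc 1 A, (a.gcd m : ℝ) ≤ A * #m.divisors := by
    exact_mod_cast sum_Icc_gcd_le A (by omega : m ≠ 0)
  calc (1 / (A : ℝ)) * ∑ a ∈ Icc 1 A, ∑ n ∈ range m, sinBound U (π * ((a * n + b) / m))
      ≤ (1 / A) * ∑ a ∈ Icc 1 A, (2 * a.gcd m * U + 2 * m * log m) := by
        gcongr with a
        exact sum_sinBound_mul_add_div_le hU.le a hm b
    _ = 2 * U / A * ∑ a ∈ Icc 1 A, (a.gcd m : ℝ) + 2 * m * log m := by
        rw [sum_add_distrib, sum_const, Nat.card_Icc, add_tsub_cancel_right, nsmul_eq_mul,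
          ← sum_mul, ← mul_sum]
        field_simp
    _ ≤ 2 * U / A * (A * #m.divisors) + 2 * m * log m := by gcongr
    _ = 2 * (#m.divisors * U + m * log m) := by field_simp
end

section
/- Let ν, λ, ρ be nonnegative integers with ν + ρ ≤ λ ≤ 2ν, and let 0 ≤ r ≤ q^ρ. Then the number of integers n < q^ν for which there exists j ≥ λ with ε_j((n+r)²) ≠ ε_j(n²) is O(q^{2ν+ρ-λ}), where ε_j denotes the j-th digit in base q and the implied constant depends only on q. -/
/-!
If a digit of index `j ≥ λ` of `(n + r)²` and `n²` differ, then already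
`⌊(n + r)² / q^λ⌋ ≠ ⌊n² / q^λ⌋`, i.e. some multiple `m q^λ` lies in `(n², (n + r)²]`.
For each such `m` the integers `n` with `n² < m q^λ ≤ (n + r)²` are the `r` integers just below
`⌈√(m q^λ)⌉`, and since `n + r ≤ 2 q^ν` only `m ≤ 4 q^{2ν-λ}` occur; this gives at most
`4 q^{2ν-λ} r ≤ 4 q^{2ν+ρ-λ}` values of `n`.
-/

open Finset

lemma Nat.div_pow_mod_eq_of_div_pow_eq {q x y lam j : ℕ} (hj : lam ≤ j)
    (h : x / q ^ lam = y / q ^ lam) : x / q ^ j % q = y / q ^ j % q := by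
  obtain ⟨i, rfl⟩ := Nat.exists_eq_add_of_le hj
  simp only [pow_add, ← Nat.div_div_eq_div_mul, h]

/-- `Nat.sqrt (k - 1) + 1` is `⌈√k⌉` for `k ≥ 1`. -/
lemma Nat.mem_Ico_of_sq_lt_of_le_add_sq {n r k : ℕ} (hlt : n ^ 2 < k) (hle : k ≤ (n + r) ^ 2) :
    n ∈ Ico (Nat.sqrt (k - 1) + 1 - r) (Nat.sqrt (k - 1) + 1) := by
  have hn : n ≤ Nat.sqrt (k - 1) := Nat.le_sqrt'.mpr (by omega)
  have hnr : Nat.sqrt (k - 1) < n + r := Nat.sqrt_lt'.mpr (by omega)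
  rw [mem_Ico]
  omega

lemma Nat.ncard_sq_div_ne_le (X N r : ℕ) (hX : 0 < X) :
    {n : ℕ | n < N ∧ (n + r) ^ 2 / X ≠ n ^ 2 / X}.ncard ≤ (N + r) ^ 2 / X * r := by
  set M := (N + r) ^ 2 / X
  let window : ℕ → Finset ℕ := fun m =>
    Ico (Nat.sqrt (m * X - 1) + 1 - r) (Nat.sqrt (m * X - 1) + 1)
  have hsub : {n : ℕ | n < N ∧ (n + r) ^ 2 / X ≠ n ^ 2 / X} ⊆ ↑((Icc 1 M).biUnion window) := by
    rintro n ⟨hn, hne⟩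
    set m := (n + r) ^ 2 / X
    have hlt : n ^ 2 / X < m :=
      (Nat.div_le_div_right (Nat.pow_le_pow_left (Nat.le_add_right n r) 2)).lt_of_ne' hne
    have hmM : m ≤ M := Nat.div_le_div_right (Nat.pow_le_pow_left (by omega) 2)
    refine mem_coe.mpr (mem_biUnion.mpr ⟨m, mem_Icc.mpr ⟨Nat.one_le_of_lt hlt, hmM⟩, ?_⟩)
    exact Nat.mem_Ico_of_sq_lt_of_le_add_sq ((Nat.div_lt_iff_lt_mul hX).mp hlt)
      (Nat.div_mul_le_self _ _)
  calc _ ≤ ((Icc 1 M).biUnion window).card :=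
        (Set.ncard_le_ncard hsub (finite_toSet _)).trans_eq (Set.ncard_coe_finset _)
    _ ≤ (Icc 1 M).card * r := card_biUnion_le_card_mul _ _ _ fun m _ => by
          simp only [window, Nat.card_Ico]; omega
    _ = M * r := by simp

/-- Carry lemma: the number of `n < q^ν` for which some digit of index `j ≥ λ`
of `(n+r)²` and `n²` (in base `q`) differ is `O(q^{2ν+ρ-λ})`, the implied constant
depending only on `q`. -/
theorem stmt16 (q : ℕ) (hq : 2 ≤ q) :
    ∃ C : ℝ, 0 < C ∧ ∀ ν lam ρ r : ℕ, ν + ρ ≤ lam → lam ≤ 2 * ν → r ≤ q ^ ρ →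
      (Set.ncard {n : ℕ | n < q ^ ν ∧
          ∃ j : ℕ, lam ≤ j ∧ (n + r) ^ 2 / q ^ j % q ≠ n ^ 2 / q ^ j % q} : ℝ) ≤
        C * (q : ℝ) ^ (2 * ν + ρ - lam) := by
  refine ⟨4, by norm_num, fun ν lam ρ r hρ hlam hr => ?_⟩
  have hq0 : 0 < q := by omega
  have hsub : {n : ℕ | n < q ^ ν ∧
      ∃ j : ℕ, lam ≤ j ∧ (n + r) ^ 2 / q ^ j % q ≠ n ^ 2 / q ^ j % q} ⊆
      {n : ℕ | n < q ^ ν ∧ (n + r) ^ 2 / q ^ lam ≠ n ^ 2 / q ^ lam} :=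
    fun n ⟨hn, j, hj, hne⟩ => ⟨hn, fun h => hne (Nat.div_pow_mod_eq_of_div_pow_eq hj h)⟩
  have hr' : q ^ ν + r ≤ 2 * q ^ ν := by
    have := Nat.pow_le_pow_right hq0 (show ρ ≤ ν by omega)
    omega
  have hM : (q ^ ν + r) ^ 2 / q ^ lam ≤ 4 * q ^ (2 * ν - lam) := by
    refine Nat.div_le_of_le_mul ?_
    calc (q ^ ν + r) ^ 2 ≤ (2 * q ^ ν) ^ 2 := Nat.pow_le_pow_left hr' 2
      _ = q ^ lam * (4 * q ^ (2 * ν - lam)) := by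
          rw [mul_left_comm, ← pow_add, Nat.add_sub_cancel' hlam]; ring
  have hcount : Set.ncard {n : ℕ | n < q ^ ν ∧
      ∃ j : ℕ, lam ≤ j ∧ (n + r) ^ 2 / q ^ j % q ≠ n ^ 2 / q ^ j % q} ≤
      4 * q ^ (2 * ν + ρ - lam) :=
    calc _ ≤ Set.ncard {n : ℕ | n < q ^ ν ∧ (n + r) ^ 2 / q ^ lam ≠ n ^ 2 / q ^ lam} :=
          Set.ncard_le_ncard hsub ((Set.finite_lt_nat _).subset fun n hn => hn.1)
      _ ≤ (q ^ ν + r) ^ 2 / q ^ lam * r := Nat.ncard_sq_div_ne_le _ _ _ (pow_pos hq0 lam)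
      _ ≤ 4 * q ^ (2 * ν - lam) * q ^ ρ := Nat.mul_le_mul hM hr
      _ = 4 * q ^ (2 * ν + ρ - lam) := by
          rw [mul_assoc, ← pow_add, Nat.sub_add_comm hlam]
  exact_mod_cast hcount
end

section
/- Let q ≥ 2, k ≥ 1, m ≥ 1, and let I_k denote the set of integer vectors I = (i_0,...,i_{k-1}) with i_0 < q^{m-1} and i_{ℓ-1} ≤ i_ℓ ≤ i_{ℓ-1} + q^{m-1} for 1 ≤ ℓ ≤ k-1. For j ≥ 1 and ε, δ ∈ {0,...,q^j - 1}, define T^j_{ε,δ}(I) = (⌊(i_ℓ + q^{m-1}(ε + ℓδ))/q^j⌋)_{ℓ<k}. Then: (a) T^j_{ε,δ}(I) ∈ I_k; (b) T^{j_2}_{ε_2,δ_2} ∘ T^{j_1}_{ε_1,δ_1} = T^{j_1+j_2}_{ε_2 q^{j_1}+ε_1, δ_2 q^{j_1}+δ_1} for ε_i, δ_i ∈ {0,...,q^{j_i}-1}. -/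
/-! Floor division by `q^j` is monotone, and an offset that is a multiple of `q^j` passes
through it: `(x + c * n) / n = x / n + c`. Since `ε, δ < q^j`, the shifts by `q^(m-1) ε` and
`q^(m-1) δ` are smaller than `q^(m-1) q^j`, so the defining inequalities of `I_k` survive the
division. The composition law is `⌊(⌊x / a⌋ + y) / b⌋ = ⌊(x + a y) / (a b)⌋`. -/

/-- Membership in the set `I_k`: `i_0 < q^(m-1)` and
`i_{ℓ-1} ≤ i_ℓ ≤ i_{ℓ-1} + q^(m-1)` for `1 ≤ ℓ ≤ k-1`. -/
def memIk (q m k : ℕ) (i : Fin k → ℕ) : Prop :=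
  (∀ h : 0 < k, i ⟨0, h⟩ < q ^ (m - 1)) ∧
  ∀ ℓ : ℕ, ∀ h : ℓ + 1 < k,
    i ⟨ℓ, Nat.lt_of_succ_lt h⟩ ≤ i ⟨ℓ + 1, h⟩ ∧
    i ⟨ℓ + 1, h⟩ ≤ i ⟨ℓ, Nat.lt_of_succ_lt h⟩ + q ^ (m - 1)

/-- The transformation `T^j_{ε,δ}(I) = (⌊(i_ℓ + q^(m-1)(ε + ℓδ))/q^j⌋)_{ℓ<k}`. -/
def Tmap (q m k j ε δ : ℕ) (i : Fin k → ℕ) : Fin k → ℕ :=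
  fun ℓ => (i ℓ + q ^ (m - 1) * (ε + ℓ.val * δ)) / q ^ j

theorem add_mul_div_lt {a c e n : ℕ} (ha : a < c) (he : e < n) : (a + c * e) / n < c := by
  rw [Nat.div_lt_iff_lt_mul (Nat.zero_lt_of_lt he)]
  calc a + c * e < c * (e + 1) := by rw [mul_add_one]; omega
    _ ≤ c * n := Nat.mul_le_mul_left c he

theorem add_mul_div_le_div_add {a b c d n : ℕ} (hb : b ≤ a + c) (hd : d < n) :
    (b + c * d) / n ≤ a / n + c := by
  have hbd : b + c * d ≤ a + c * n :=
    calc b + c * d ≤ a + c * (d + 1) := by rw [mul_add_one]; omega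
      _ ≤ a + c * n := Nat.add_le_add_left (Nat.mul_le_mul_left c hd) a
  calc (b + c * d) / n ≤ (a + c * n) / n := Nat.div_le_div_right hbd
    _ = a / n + c := Nat.add_mul_div_right a c (Nat.zero_lt_of_lt hd)

theorem memIk_Tmap {q m k j ε δ : ℕ} {i : Fin k → ℕ} (hε : ε < q ^ j) (hδ : δ < q ^ j)
    (hi : memIk q m k i) : memIk q m k (Tmap q m k j ε δ i) := by
  obtain ⟨hfirst, hstep⟩ := hi
  refine ⟨fun h => ?_, fun ℓ h => ?_⟩
  · simpa only [Tmap, zero_mul, add_zero] using add_mul_div_lt (hfirst h) hε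
  · obtain ⟨hle, hge⟩ := hstep ℓ h
    have hshift : q ^ (m - 1) * (ε + (ℓ + 1) * δ) =
        q ^ (m - 1) * (ε + ℓ * δ) + q ^ (m - 1) * δ := by
      ring
    simp only [Tmap, hshift, ← add_assoc]
    exact ⟨Nat.div_le_div_right (by omega), add_mul_div_le_div_add (by omega) hδ⟩

theorem Tmap_comp {q m k j₁ j₂ ε₁ δ₁ ε₂ δ₂ : ℕ} (hq : 0 < q ^ j₁) :
    Tmap q m k j₂ ε₂ δ₂ ∘ Tmap q m k j₁ ε₁ δ₁ =
      Tmap q m k (j₁ + j₂) (ε₂ * q ^ j₁ + ε₁) (δ₂ * q ^ j₁ + δ₁) := by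
  funext i ℓ
  have hsplit : i ℓ + q ^ (m - 1) * (ε₂ * q ^ j₁ + ε₁ + ℓ * (δ₂ * q ^ j₁ + δ₁)) =
      i ℓ + q ^ (m - 1) * (ε₁ + ℓ * δ₁) + q ^ (m - 1) * (ε₂ + ℓ * δ₂) * q ^ j₁ := by
    ring
  simp only [Function.comp, Tmap]
  rw [hsplit, pow_add, ← Nat.div_div_eq_div_mul, Nat.add_mul_div_right _ _ hq]

theorem stmt19_general (q m k : ℕ) :
    (∀ j ε δ : ℕ, 1 ≤ j → ε < q ^ j → δ < q ^ j →
      ∀ i : Fin k → ℕ, memIk q m k i → memIk q m k (Tmap q m k j ε δ i)) ∧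
    (∀ j1 j2 ε1 δ1 ε2 δ2 : ℕ, 1 ≤ j1 → 1 ≤ j2 →
      ε1 < q ^ j1 → δ1 < q ^ j1 → ε2 < q ^ j2 → δ2 < q ^ j2 →
      Tmap q m k j2 ε2 δ2 ∘ Tmap q m k j1 ε1 δ1 =
        Tmap q m k (j1 + j2) (ε2 * q ^ j1 + ε1) (δ2 * q ^ j1 + δ1)) :=
  ⟨fun _ _ _ _ hε hδ _ hi => memIk_Tmap hε hδ hi,
    fun _ _ _ _ _ _ _ _ hε1 _ _ _ => Tmap_comp (Nat.zero_lt_of_lt hε1)⟩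

/-- (a) `T^j_{ε,δ}` maps `I_k` to `I_k`; (b) the composition law
`T^{j₂}_{ε₂,δ₂} ∘ T^{j₁}_{ε₁,δ₁} = T^{j₁+j₂}_{ε₂ q^{j₁}+ε₁, δ₂ q^{j₁}+δ₁}`. -/
theorem stmt19 (q m k : ℕ) (hq : 2 ≤ q) (hm : 1 ≤ m) (hk : 1 ≤ k) :
    (∀ j ε δ : ℕ, 1 ≤ j → ε < q ^ j → δ < q ^ j →
      ∀ i : Fin k → ℕ, memIk q m k i → memIk q m k (Tmap q m k j ε δ i)) ∧
    (∀ j1 j2 ε1 δ1 ε2 δ2 : ℕ, 1 ≤ j1 → 1 ≤ j2 →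
      ε1 < q ^ j1 → δ1 < q ^ j1 → ε2 < q ^ j2 → δ2 < q ^ j2 →
      Tmap q m k j2 ε2 δ2 ∘ Tmap q m k j1 ε1 δ1 =
        Tmap q m k (j1 + j2) (ε2 * q ^ j1 + ε1) (δ2 * q ^ j1 + δ1)) :=
  stmt19_general q m k
end
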